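/- arXiv:0803.3335 — 4 statements merged into one kernel-verified Lean document; each statement's English description precedes it below -/
import Mathlib

section
/- If w is a permutation in S_n, j satisfies 2 ≤ j ≤ n-1, and w(j-1) lies strictly between w(j) and w(j+1), then w and the permutation w' obtained from w by swapping the values in positions j and j+1 have the same Robinson–Schensted insertion tableau (left tableau). -/
/-- The symmetric group `S_n`, realized as permutations of `ℤ` fixing everything
outside `{1, …, n}`. -/
def Sgrp (n : ℕ) : Set (Equiv.Perm ℤ) :=
  {w | ∀ i : ℤ, (i < 1 ∨ (n : ℤ) < i) → w i = i}

/-- The simple transposition `s_j` swapping `j` and `j+1`. -/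
def aswap (j : ℕ) : Equiv.Perm ℤ := Equiv.swap (j : ℤ) ((j : ℤ) + 1)

/-- Coxeter length on `S_n` with respect to the adjacent transpositions
`s_1, …, s_{n-1}`: minimal length of a word in these generators. -/
noncomputable def lenA (n : ℕ) (w : Equiv.Perm ℤ) : ℕ :=
  sInf {k | ∃ l : List (Equiv.Perm ℤ), l.length = k ∧
    (∀ g ∈ l, ∃ j : ℕ, 1 ≤ j ∧ j < n ∧ g = aswap j) ∧ l.prod = w}

/-- Row insertion: insert `x` into a row, returning the new row and the bumped
entry (if any). For distinct entries: `x` replaces the leftmost entry `> x`. -/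
def insertRow (x : ℕ) : List ℕ → List ℕ × Option ℕ
  | [] => ([x], none)
  | y :: ys =>
    if x < y then (x :: ys, some y)
    else (y :: (insertRow x ys).1, (insertRow x ys).2)

/-- Schensted insertion of `x` into a tableau given as its list of rows. -/
def insertTab : List (List ℕ) → ℕ → List (List ℕ)
  | [], x => [[x]]
  | row :: rest, x =>
    match insertRow x row with
    | (r, none) => r :: rest
    | (r, some y) => r :: insertTab rest y

/-- The Robinson–Schensted insertion (left) tableau `P(w)` of a word. -/
def Ptab (l : List ℕ) : List (List ℕ) := l.foldl insertTab []

/-- One-line notation `(w(1), …, w(n))` of a permutation in `S_n`. -/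
def oneLine (n : ℕ) (w : Equiv.Perm ℤ) : List ℕ :=
  (List.range' 1 n).map (fun j => (w (j : ℤ)).toNat)

/-!
Inserting a word into a tableau with first row `R` row-inserts the word into `R` and then inserts
the word of bumped letters into the remaining rows. For `a < b < c` with `b ∉ R`, the words `b c a`
and `b a c` leave the same first row, and their bumped words either coincide or are `β γ α` and
`β α γ` with `α < β < γ` and `β ∈ R`: the same move one row down. Induction on the rows gives
`P(u b c a v) = P(u b a c v)` whenever the entries are distinct. The one-line word of `w ∈ S_n` has
distinct entries, and swapping the values at positions `j` and `j + 1` is exactly this move with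
`b = w(j - 1)`.
-/

def insertRowWord : List ℕ → List ℕ → List ℕ × List ℕ
  | R, [] => (R, [])
  | R, x :: u =>
    ((insertRowWord (insertRow x R).1 u).1,
      (insertRow x R).2.toList ++ (insertRowWord (insertRow x R).1 u).2)

theorem insertRow_perm (x : ℕ) (R : List ℕ) :
    ((insertRow x R).1 ++ (insertRow x R).2.toList).Perm (x :: R) := by
  induction R with
  | nil => simp [insertRow]
  | cons z R ih =>
    unfold insertRow
    split_ifs
    · simp
    · simpa using (ih.cons z).trans (List.Perm.swap x z R)

theorem lt_and_mem_of_insertRow_snd_eq_some {x y : ℕ} {R : List ℕ}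
    (h : (insertRow x R).2 = some y) : x < y ∧ y ∈ R := by
  induction R with
  | nil => simp [insertRow] at h
  | cons z R ih =>
    unfold insertRow at h
    split_ifs at h with hxz
    · cases h; simp [hxz]
    · exact (ih h).imp_right (List.mem_cons_of_mem z)

theorem insertRow_pairwise {x : ℕ} {R : List ℕ} (hR : R.Pairwise (· < ·)) (hx : x ∉ R) :
    (insertRow x R).1.Pairwise (· < ·) := by
  induction R with
  | nil => simp [insertRow]
  | cons z R ih =>
    rw [List.pairwise_cons] at hR
    unfold insertRow
    split_ifs with hxz
    · exact List.pairwise_cons.2 ⟨fun y hy => hxz.trans (hR.1 y hy), hR.2⟩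
    · refine List.pairwise_cons.2 ⟨fun y hy => ?_, ih hR.2 (by simp_all)⟩
      have hy' := (insertRow_perm x R).subset (List.mem_append_left _ hy)
      rcases List.mem_cons.1 hy' with rfl | hy
      · simp at hx; omega
      · exact hR.1 y hy

theorem insertRow_insertRow_bump_lt {b c γ : ℕ} {R : List ℕ} (hR : R.Pairwise (· < ·))
    (hbc : b < c) (h : (insertRow c (insertRow b R).1).2 = some γ) :
    ∃ β, (insertRow b R).2 = some β ∧ β < γ := by
  induction R with
  | nil => simp [insertRow, hbc.not_gt] at h
  | cons z R ih =>
    rw [List.pairwise_cons] at hR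
    by_cases hbz : b < z
    · simp only [insertRow, hbz, if_true, hbc.not_gt, if_false] at h ⊢
      exact ⟨z, rfl, hR.1 γ (lt_and_mem_of_insertRow_snd_eq_some h).2⟩
    · simp only [insertRow, hbz, if_false, show ¬ c < z by omega] at h ⊢
      exact ih hR.2 h

theorem insertRowWord_cons_of_forall_not_lt {z : ℕ} {u : List ℕ} (hu : ∀ x ∈ u, ¬ x < z)
    (R : List ℕ) :
    insertRowWord (z :: R) u = (z :: (insertRowWord R u).1, (insertRowWord R u).2) := by
  induction u generalizing R with
  | nil => rfl
  | cons x u ih =>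
    simp only [List.forall_mem_cons] at hu
    simp only [insertRowWord, insertRow, hu.1, if_false, ih hu.2]

theorem insertRowWord_knuth {R : List ℕ} (hR : R.Pairwise (· < ·)) {a b c : ℕ}
    (hab : a < b) (hbc : b < c) (hb : b ∉ R) :
    (insertRowWord R [b, c, a]).1 = (insertRowWord R [b, a, c]).1 ∧
      ((insertRowWord R [b, c, a]).2 = (insertRowWord R [b, a, c]).2 ∨
        ∃ α β γ, α < β ∧ β < γ ∧ β ∈ R ∧
          (insertRowWord R [b, a, c]).2 = [β, α, γ] ∧
          (insertRowWord R [b, c, a]).2 = [β, γ, α]) := by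
  induction R with
  | nil => simp [insertRowWord, insertRow, hab, hbc.not_gt, (hab.trans hbc).not_gt]
  | cons z R ih =>
    rw [List.pairwise_cons] at hR
    rw [List.mem_cons, not_or] at hb
    rcases lt_or_gt_of_ne hb.1 with hbz | hzb
    · have hcb := (hab.trans hbc).not_gt
      rcases hγ : (insertRow c R).2 with _ | γ
      · simp [insertRowWord, insertRow, hbz, hab, hbc.not_gt, hcb, hγ]
      · have hzγ := hR.1 γ (lt_and_mem_of_insertRow_snd_eq_some hγ).2
        simp [insertRowWord, insertRow, hbz, hab, hbc.not_gt, hcb, hγ, hzγ]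
    rcases lt_or_ge a z with haz | hza
    · have hcz : ¬ c < z := by omega
      have hcb := (hab.trans hbc).not_gt
      rcases hγ : (insertRow c (insertRow b R).1).2 with _ | γ
      · simp [insertRowWord, insertRow, hzb.not_gt, haz, hcb, hcz, hγ]
      obtain ⟨β, hβ, hβγ⟩ := insertRow_insertRow_bump_lt hR.2 hbc hγ
      have hbβ := lt_and_mem_of_insertRow_snd_eq_some hβ
      have hzβ := hzb.trans hbβ.1
      simp [insertRowWord, insertRow, hzb.not_gt, haz, hcb, hcz, hγ, hβ, hβγ, hzβ, hbβ.2]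
    · rw [insertRowWord_cons_of_forall_not_lt (by simp; omega),
        insertRowWord_cons_of_forall_not_lt (by simp; omega)]
      obtain ⟨hrow, hbump⟩ := ih hR.2 hb.2
      refine ⟨by rw [hrow], hbump.imp_right ?_⟩
      rintro ⟨α, β, γ, hαβ, hβγ, hβ, h₁, h₂⟩
      exact ⟨α, β, γ, hαβ, hβγ, List.mem_cons_of_mem z hβ, h₁, h₂⟩

theorem insertTab_cons (R : List ℕ) (S : List (List ℕ)) (x : ℕ) :
    insertTab (R :: S) x = (insertRow x R).1 :: (insertRow x R).2.toList.foldl insertTab S := by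
  rcases h : insertRow x R with ⟨R', _ | y⟩ <;> simp [insertTab, h]

theorem foldl_insertTab_cons (u R : List ℕ) (S : List (List ℕ)) :
    u.foldl insertTab (R :: S) =
      (insertRowWord R u).1 :: (insertRowWord R u).2.foldl insertTab S := by
  induction u generalizing R S with
  | nil => rfl
  | cons x u ih => simp [insertRowWord, insertTab_cons, ih]

theorem flatten_insertTab_perm (T : List (List ℕ)) (x : ℕ) :
    (insertTab T x).flatten.Perm (x :: T.flatten) := by
  induction T generalizing x with
  | nil => simp [insertTab]
  | cons R S ih =>
    have hrow := insertRow_perm x R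
    rw [insertTab_cons]
    rcases h : (insertRow x R).2 with _ | y <;> rw [h] at hrow
    · simpa using hrow.append_right S.flatten
    · have hrest := (hrow.append_right S.flatten)
      simp only [Option.toList_some, List.append_assoc, List.singleton_append] at hrest
      simpa using ((ih y).append_left _).trans hrest

/-- Knuth moves need no column condition. -/
def IsStrictRowTableau (T : List (List ℕ)) : Prop :=
  (∀ R ∈ T, R.Pairwise (· < ·)) ∧ T.flatten.Nodup

theorem isStrictRowTableau_insertTab {T : List (List ℕ)} (hT : IsStrictRowTableau T) {x : ℕ}
    (hx : x ∉ T.flatten) : IsStrictRowTableau (insertTab T x) := by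
  refine ⟨?_, (flatten_insertTab_perm T x).nodup_iff.2 (List.nodup_cons.2 ⟨hx, hT.2⟩)⟩
  induction T generalizing x with
  | nil => simp [insertTab]
  | cons R S ih =>
    obtain ⟨hrows, hnd⟩ := hT
    simp only [List.flatten_cons, List.nodup_append, List.mem_append, not_or] at hnd hx
    simp only [List.forall_mem_cons] at hrows
    rw [insertTab_cons, List.forall_mem_cons]
    refine ⟨insertRow_pairwise hrows.1 hx.1, ?_⟩
    rcases h : (insertRow x R).2 with _ | y
    · exact hrows.2
    · have hyR := (lt_and_mem_of_insertRow_snd_eq_some h).2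
      exact ih ⟨hrows.2, hnd.2.1⟩ (fun hyS => hnd.2.2 y hyR y hyS rfl)

theorem isStrictRowTableau_foldl_insertTab {T : List (List ℕ)} (hT : IsStrictRowTableau T)
    {u : List ℕ} (hu : (u ++ T.flatten).Nodup) : IsStrictRowTableau (u.foldl insertTab T) := by
  induction u generalizing T with
  | nil => exact hT
  | cons x u ih =>
    rw [List.cons_append, List.nodup_cons, List.mem_append, not_or] at hu
    refine ih (isStrictRowTableau_insertTab hT hu.1.2) ?_
    exact (((flatten_insertTab_perm T x).append_left u).trans List.perm_middle).nodup_iff.2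
      (List.nodup_cons.2 ⟨by simpa using hu.1, hu.2⟩)

theorem flatten_foldl_insertTab_perm (u : List ℕ) (T : List (List ℕ)) :
    (u.foldl insertTab T).flatten.Perm (u ++ T.flatten) := by
  induction u generalizing T with
  | nil => rfl
  | cons x u ih =>
    exact (ih _).trans (((flatten_insertTab_perm T x).append_left u).trans List.perm_middle)

theorem foldl_insertTab_knuth {T : List (List ℕ)} (hT : IsStrictRowTableau T) {a b c : ℕ}
    (hab : a < b) (hbc : b < c) (hb : b ∉ T.flatten) :
    [b, c, a].foldl insertTab T = [b, a, c].foldl insertTab T := by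
  induction T generalizing a b c with
  | nil => simp [insertTab, insertRow, hab, hbc.not_gt, (hab.trans hbc).not_gt]
  | cons R S ih =>
    obtain ⟨hrows, hnd⟩ := hT
    simp only [List.flatten_cons, List.nodup_append, List.mem_append, not_or] at hnd hb
    simp only [List.forall_mem_cons] at hrows
    rw [foldl_insertTab_cons, foldl_insertTab_cons]
    obtain ⟨hrow, hbump | ⟨α, β, γ, hαβ, hβγ, hβ, h₁, h₂⟩⟩ :=
      insertRowWord_knuth hrows.1 hab hbc hb.1
    · rw [hrow, hbump]
    · -- `β` is an entry of `R`, hence not of the rows below.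
      rw [hrow, h₁, h₂, ih ⟨hrows.2, hnd.2.1⟩ hαβ hβγ (fun hβS => hnd.2.2 β hβ β hβS rfl)]

theorem Ptab_append_knuth {u : List ℕ} (hu : u.Nodup) {a b c : ℕ} (hb : b ∉ u)
    (hab : a < b) (hbc : b < c) (v : List ℕ) :
    Ptab (u ++ b :: c :: a :: v) = Ptab (u ++ b :: a :: c :: v) := by
  have hT : IsStrictRowTableau (Ptab u) :=
    isStrictRowTableau_foldl_insertTab (by simp [IsStrictRowTableau]) (by simpa using hu)
  have hbT : b ∉ (Ptab u).flatten :=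
    (flatten_foldl_insertTab_perm u []).mem_iff.not.2 (by simpa using hb)
  have hknuth := foldl_insertTab_knuth hT hab hbc hbT
  simp only [Ptab, List.foldl_append, List.foldl_cons, List.foldl_nil] at hknuth ⊢
  rw [hknuth]

theorem pos_of_mem_Sgrp {n : ℕ} {w : Equiv.Perm ℤ} (hw : w ∈ Sgrp n) {i : ℤ} (hi : 1 ≤ i) :
    0 < w i := by
  by_contra! h
  have hfix : w (w i) = w i := hw (w i) (Or.inl (by omega))
  have := w.injective hfix
  omega

/-- In `oneLine` the list `List.range' 1 n` is coerced to a list of integers before mapping. -/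
theorem oneLine_eq_map (n : ℕ) (w : Equiv.Perm ℤ) :
    oneLine n w = (List.range' 1 n).map fun k : ℕ => (w k).toNat := by
  simp [oneLine, ← List.map_eq_flatMap, Function.comp_def]

theorem oneLine_nodup {n : ℕ} {w : Equiv.Perm ℤ} (hw : w ∈ Sgrp n) : (oneLine n w).Nodup := by
  rw [oneLine_eq_map]
  refine (List.nodup_range' (s := 1) (n := n)).map_on fun x hx y hy hxy => ?_
  rw [List.mem_range'_1] at hx hy
  have hwx := pos_of_mem_Sgrp hw (i := x) (by omega)
  have hwy := pos_of_mem_Sgrp hw (i := y) (by omega)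
  exact_mod_cast w.injective (by omega : w x = w y)

theorem range'_one_eq_append {n j : ℕ} (hj1 : 2 ≤ j) (hj2 : j + 1 ≤ n) :
    List.range' 1 n =
      List.range' 1 (j - 2) ++ (j - 1) :: j :: (j + 1) :: List.range' (j + 2) (n - j - 1) := by
  obtain ⟨i, rfl⟩ := Nat.exists_eq_add_of_le' hj1
  obtain ⟨m, rfl⟩ := Nat.exists_eq_add_of_le hj2
  rw [show i + 2 + 1 + m = i + (m + 3) by omega, ← List.range'_append_1]
  simp only [List.range'_succ, Nat.add_sub_cancel]
  grind

theorem oneLine_mul_aswap (w : Equiv.Perm ℤ) {n j : ℕ} (hj1 : 2 ≤ j) (hj2 : j + 1 ≤ n) :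
    ∃ u v : List ℕ,
      oneLine n w =
        u ++ (w ((j : ℤ) - 1)).toNat :: (w j).toNat :: (w ((j : ℤ) + 1)).toNat :: v ∧
      oneLine n (w * aswap j) =
        u ++ (w ((j : ℤ) - 1)).toNat :: (w ((j : ℤ) + 1)).toNat :: (w j).toNat :: v := by
  have hfix : ∀ k : ℤ, k < j ∨ j + 1 < k → Equiv.swap (j : ℤ) (j + 1) k = k := fun k hk =>
    Equiv.swap_apply_of_ne_of_ne (by omega) (by omega)
  have hmap : ∀ s m, j + 1 < s ∨ s + m ≤ j →
      (List.range' s m).map (fun k : ℕ => (w (Equiv.swap (j : ℤ) (j + 1) k)).toNat) =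
        (List.range' s m).map fun k : ℕ => (w k).toNat := fun s m hsm =>
    List.map_congr_left fun k hk => by
      rw [List.mem_range'_1] at hk
      rw [hfix k (by omega)]
  refine ⟨(List.range' 1 (j - 2)).map fun k : ℕ => (w k).toNat,
    (List.range' (j + 2) (n - j - 1)).map fun k : ℕ => (w k).toNat, ?_, ?_⟩ <;>
    simp only [oneLine_eq_map, range'_one_eq_append hj1 hj2, List.map_append, List.map_cons,
      Nat.cast_sub (by omega : 1 ≤ j), Nat.cast_add, Nat.cast_one]
  simp only [Equiv.Perm.mul_apply, aswap, hfix (j - 1) (by omega), Equiv.swap_apply_left,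
    Equiv.swap_apply_right, hmap 1 (j - 2) (by omega), hmap (j + 2) (n - j - 1) (by omega)]

/-- Knuth relation of the first kind: if `2 ≤ j ≤ n-1` and `w(j-1)` lies strictly
between `w(j)` and `w(j+1)`, then swapping the values in positions `j` and `j+1`
preserves the Robinson–Schensted insertion tableau. -/
theorem knuth_first_kind (n : ℕ) (w : Equiv.Perm ℤ) (hw : w ∈ Sgrp n)
    (j : ℕ) (hj1 : 2 ≤ j) (hj2 : j + 1 ≤ n)
    (hbetween : (w (j : ℤ) < w ((j : ℤ) - 1) ∧ w ((j : ℤ) - 1) < w ((j : ℤ) + 1)) ∨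
      (w ((j : ℤ) + 1) < w ((j : ℤ) - 1) ∧ w ((j : ℤ) - 1) < w (j : ℤ))) :
    Ptab (oneLine n (w * aswap j)) = Ptab (oneLine n w) := by
  obtain ⟨u, v, hw_eq, hsw_eq⟩ := oneLine_mul_aswap w hj1 hj2
  have hnd := oneLine_nodup hw
  rw [hw_eq, List.nodup_append] at hnd
  have hu : u.Nodup := hnd.1
  have hb : (w ((j : ℤ) - 1)).toNat ∉ u := fun h => hnd.2.2 _ h _ List.mem_cons_self rfl
  have htoNat : ∀ {x i : ℤ}, 1 ≤ i → x < w i → x.toNat < (w i).toNat :=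
    fun hi h => (Int.toNat_lt_toNat (pos_of_mem_Sgrp hw hi)).2 h
  rw [hw_eq, hsw_eq]
  rcases hbetween with ⟨hlt, hgt⟩ | ⟨hlt, hgt⟩
  · exact Ptab_append_knuth hu hb (htoNat (by omega) hlt) (htoNat (by omega) hgt) v
  · exact (Ptab_append_knuth hu hb (htoNat (by omega) hlt) (htoNat (by omega) hgt) v).symm
end

section
/- Two permutations in S_n have the same Robinson–Schensted insertion tableau if and only if they are connected by a sequence of Knuth relations. -/
/-- `a` lies strictly between `b` and `c`. -/
def StrictlyBetween (a b c : ℤ) : Prop := (b < a ∧ a < c) ∨ (c < a ∧ a < b)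

/-- A single Knuth relation on `S_n`: transpose the entries in positions `j` and
`j+1` when `w(j-1)` (case (i)) or `w(j+2)` (case (ii)) lies strictly between
`w(j)` and `w(j+1)`. -/
def KnuthStep (n : ℕ) (w v : Equiv.Perm ℤ) : Prop :=
  ∃ j : ℕ, 1 ≤ j ∧ j + 1 ≤ n ∧ v = w * aswap j ∧
    ((2 ≤ j ∧ StrictlyBetween (w ((j : ℤ) - 1)) (w (j : ℤ)) (w ((j : ℤ) + 1))) ∨
     (j + 2 ≤ n ∧ StrictlyBetween (w ((j : ℤ) + 2)) (w (j : ℤ)) (w ((j : ℤ) + 1))))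

/-!
Knuth's argument. A Knuth move rewrites a factor `y x z ↔ y z x` or `x z y ↔ z x y` of a word
(`x < y < z`). Row-inserting such a factor into an increasing row gives the same new row either
way, and the two words of bumped letters are equal or again differ by a Knuth move; by induction
on the rows, Knuth moves do not change `P`. Conversely, a word is Knuth equivalent to the reading
word of its insertion tableau: inserting `x` into a row `A b B` (`A < x < b < B`) is realised by
sliding `x` to the left past `B` and then `b` to the left past `A`, after which `b` is inserted
into the rows below. Hence words with the same `P` are equivalent through the common reading word.
On `S_n`, a Knuth relation is exactly a Knuth move on one-line notations.
-/

namespace RobinsonSchensted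

open List Relation

/-! ### Row insertion -/

section Row

variable {x b r t : ℕ} {R S : List ℕ}

theorem insertRow_snd_eq_none_iff : (insertRow x R).2 = none ↔ ∀ r ∈ R, r ≤ x := by
  induction R with
  | nil => simp [insertRow]
  | cons y R ih => by_cases h : x < y <;> simp [insertRow, h, ih]; omega

theorem mem_of_insertRow_snd_eq_some (h : (insertRow x R).2 = some b) : b ∈ R := by
  induction R with
  | nil => simp [insertRow] at h
  | cons y R ih => by_cases hxy : x < y <;> simp_all [insertRow]

theorem lt_of_insertRow_snd_eq_some (h : (insertRow x R).2 = some b) : x < b := by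
  induction R with
  | nil => simp [insertRow] at h
  | cons y R ih => by_cases hxy : x < y <;> simp_all [insertRow]

theorem insertRow_snd_eq_some_iff (hR : R.SortedLT) :
    (insertRow x R).2 = some b ↔ b ∈ R ∧ x < b ∧ ∀ r ∈ R, x < r → b ≤ r := by
  induction R with
  | nil => simp [insertRow]
  | cons y R ih =>
    rw [sortedLT_iff_pairwise, pairwise_cons] at hR
    by_cases h : x < y
    · simp only [insertRow, h, if_true, Option.some.injEq, mem_cons]
      grind
    · simp only [insertRow, h, if_false, mem_cons, ih hR.2.sortedLT]
      grind

theorem mem_insertRow_fst (hR : R.Nodup) :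
    r ∈ (insertRow x R).1 ↔ r = x ∨ r ∈ R ∧ (insertRow x R).2 ≠ some r := by
  induction R with
  | nil => simp [insertRow]
  | cons y R ih =>
    rw [nodup_cons] at hR
    by_cases h : x < y
    · simp only [insertRow, h, if_true, mem_cons]
      grind
    · have hy : (insertRow x R).2 ≠ some y := fun h => hR.1 (mem_of_insertRow_snd_eq_some h)
      simp only [insertRow, h, if_false, mem_cons, ih hR.2]
      grind

theorem sortedLT_insertRow_fst (hR : R.SortedLT) (hx : x ∉ R) : (insertRow x R).1.SortedLT := by
  induction R with
  | nil => simp [insertRow, sortedLT_iff_pairwise]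
  | cons y R ih =>
    rw [sortedLT_iff_pairwise, pairwise_cons] at hR
    rw [sortedLT_iff_pairwise]
    by_cases h : x < y
    · simp only [insertRow, h, if_true, pairwise_cons]
      grind
    · simp only [insertRow, h, if_false, pairwise_cons]
      refine ⟨fun r hr => ?_, (ih hR.2.sortedLT (by grind)).pairwise⟩
      rw [mem_insertRow_fst hR.2.sortedLT.nodup] at hr
      grind

theorem perm_insertRow (x : ℕ) (R : List ℕ) :
    ((insertRow x R).1 ++ (insertRow x R).2.toList).Perm (x :: R) := by
  induction R with
  | nil => simp [insertRow]
  | cons y R ih =>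
    by_cases h : x < y
    · simp [insertRow, h]
    · simpa [insertRow, h] using (ih.cons y).trans (.swap x y R)

theorem exists_insertRow_eq (hR : R.SortedLT) (hx : x ∉ R) :
    ∃ R' o, insertRow x R = (R', o) ∧ R'.SortedLT ∧ ∀ r, r ∈ R' ↔ r = x ∨ r ∈ R ∧ o ≠ some r :=
  ⟨_, _, rfl, sortedLT_insertRow_fst hR hx, fun _ => mem_insertRow_fst hR.nodup⟩

theorem insertRow_snd_congr {x' : ℕ} (hR : R.SortedLT) (hS : S.SortedLT)
    (hRS : ∀ r, x < r ∧ r ∈ R ↔ x' < r ∧ r ∈ S) : (insertRow x R).2 = (insertRow x' S).2 := by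
  cases h : (insertRow x R).2 with
  | none =>
    rw [insertRow_snd_eq_none_iff] at h
    exact (insertRow_snd_eq_none_iff.2 fun r hr => by grind).symm
  | some c =>
    rw [insertRow_snd_eq_some_iff hR] at h
    exact ((insertRow_snd_eq_some_iff hS).2 (by grind)).symm

theorem exists_insertRow_snd_le (hR : R.SortedLT) (ht : t ∈ R) (hxt : x < t) :
    ∃ c ≤ t, (insertRow x R).2 = some c := by
  cases h : (insertRow x R).2 with
  | none => rw [insertRow_snd_eq_none_iff] at h; grind
  | some c => rw [insertRow_snd_eq_some_iff hR] at h; grind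

theorem insertRow_snd_eq_of_mem_iff_of_le (hR : R.SortedLT) (hS : S.SortedLT)
    (hb : (insertRow x R).2 = some b) (hRS : ∀ r, x < r → r ≤ b → (r ∈ R ↔ r ∈ S)) :
    (insertRow x S).2 = some b := by
  rw [insertRow_snd_eq_some_iff hR] at hb
  rw [insertRow_snd_eq_some_iff hS]
  grind

theorem exists_eq_append_of_sortedLT (hR : R.SortedLT) (hx : x ∉ R) :
    ∃ A B, R = A ++ B ∧ (∀ a ∈ A, a < x) ∧ ∀ b ∈ B, x < b := by
  induction R with
  | nil => exact ⟨[], [], rfl, by simp, by simp⟩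
  | cons y R ih =>
    rw [sortedLT_iff_pairwise, pairwise_cons] at hR
    rw [mem_cons, not_or] at hx
    by_cases hyx : y < x
    · obtain ⟨A, B, rfl, hA, hB⟩ := ih hR.2.sortedLT hx.2
      exact ⟨y :: A, B, rfl, by simpa [hyx] using hA, hB⟩
    · have hxy : x < y := by omega
      exact ⟨[], y :: R, rfl, by simp, by simpa [hxy] using fun b hb => hxy.trans (hR.1 b hb)⟩

theorem insertRow_append_of_forall_lt {A : List ℕ} (hA : ∀ a ∈ A, a < x) (B : List ℕ) :
    insertRow x (A ++ B) = (A ++ (insertRow x B).1, (insertRow x B).2) := by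
  induction A with
  | nil => rfl
  | cons a A ih =>
    simp only [forall_mem_cons] at hA
    simp [insertRow, (hA.1).not_gt, ih hA.2]

end Row

/-! ### Knuth moves and insertion tableaux -/

section Knuth

variable {x : ℕ} {R : List ℕ} {u v : List ℕ}

/-- `first_between` and `last_between` are the cases (i) and (ii) of a Knuth relation. -/
inductive KnuthCore : List ℕ → List ℕ → Prop
  | first_between {x y z : ℕ} : x < y → y < z → KnuthCore [y, x, z] [y, z, x]
  | last_between {x y z : ℕ} : x < y → y < z → KnuthCore [x, z, y] [z, x, y]

theorem KnuthCore.perm (h : KnuthCore u v) : u.Perm v := by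
  cases h with
  | first_between => exact .cons _ (.swap _ _ _)
  | last_between => exact .swap _ _ _

/-- Row insertion of a word: the resulting row, and the word of bumped letters. -/
def insertRowWord (R : List ℕ) : List ℕ → List ℕ × List ℕ
  | [] => (R, [])
  | x :: u => ((insertRowWord (insertRow x R).1 u).1,
      (insertRow x R).2.toList ++ (insertRowWord (insertRow x R).1 u).2)

theorem foldl_insertTab_cons (R : List ℕ) (T : List (List ℕ)) (u : List ℕ) :
    u.foldl insertTab (R :: T) =
      (insertRowWord R u).1 :: (insertRowWord R u).2.foldl insertTab T := by
  induction u generalizing R T with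
  | nil => rfl
  | cons x u ih =>
    rcases h : insertRow x R with ⟨R', _ | b⟩ <;>
      simp [insertTab, insertRowWord, h, ih]

theorem mem_insertRowWord_snd {b : ℕ} (h : b ∈ (insertRowWord R u).2) :
    b ∈ R ∨ b ∈ u := by
  induction u generalizing R with
  | nil => simp [insertRowWord] at h
  | cons x u ih =>
    simp only [insertRowWord, mem_append, Option.mem_toList] at h
    rcases h with h | h
    · exact .inl (mem_of_insertRow_snd_eq_some h)
    · rcases ih h with h | h
      · have := (perm_insertRow x R).subset (mem_append_left _ h)
        grind
      · exact .inr (mem_cons_of_mem _ h)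

theorem insertRowWord_first_between {x y z : ℕ} (hR : R.SortedLT) (hx : x ∉ R) (hy : y ∉ R)
    (hz : z ∉ R) (hxy : x < y) (hyz : y < z) :
    (insertRowWord R [y, x, z]).1 = (insertRowWord R [y, z, x]).1 ∧
      ReflGen (SymmGen KnuthCore) (insertRowWord R [y, x, z]).2 (insertRowWord R [y, z, x]).2 := by
  obtain ⟨R₁, b, h₁, s₁, m₁⟩ := exists_insertRow_eq (x := y) hR hy
  obtain ⟨R₂, c, h₂, s₂, m₂⟩ := exists_insertRow_eq (x := x) s₁ (by grind)
  obtain ⟨R₃, d, h₃, s₃, m₃⟩ := exists_insertRow_eq (x := z) s₂ (by grind)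
  obtain ⟨S₂, d', h₂', s₂', m₂'⟩ := exists_insertRow_eq (x := z) s₁ (by grind)
  obtain ⟨S₃, c', h₃', s₃', m₃'⟩ := exists_insertRow_eq (x := x) s₂' (by grind)
  simp only [insertRowWord, h₁, h₂, h₃, h₂', h₃', append_nil]
  -- Since `y ∈ R₁`, `x` bumps some `c₀ ≤ y`, while `z` bumps an entry `> z`: the two commute.
  obtain ⟨c₀, hc₀y, hc⟩ := exists_insertRow_snd_le s₁ ((m₁ y).2 (.inl rfl)) hxy
  replace hc : c = some c₀ := by rwa [h₂] at hc
  have hd' : ∀ e, d' = some e → z < e := fun e he =>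
    lt_of_insertRow_snd_eq_some (by rw [h₂']; exact he)
  have hc' : c' = some c₀ := by
    have := insertRow_snd_eq_of_mem_iff_of_le s₁ s₂' (by rw [h₂, hc]) fun r _ _ => by grind
    rwa [h₃'] at this
  have hd : d = d' := by
    have := insertRow_snd_congr s₂ s₁ (x := z) (x' := z) fun r => by grind
    rwa [h₃, h₂'] at this
  subst hc hc' hd
  refine ⟨s₃.eq_of_mem_iff s₃' fun r => ?_, ?_⟩
  · rw [m₃, m₃', m₂, m₂']
    grind
  -- The bumped words are `b c₀ d` and `b d c₀`, with `c₀ < b < d` when all three exist.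
  rcases hd : d with _ | d₀
  · exact .refl
  obtain ⟨-, hzd₀, -⟩ := (insertRow_snd_eq_some_iff s₁).1 (by rw [h₂', hd])
  have hd₀ : d₀ ∈ R₁ := mem_of_insertRow_snd_eq_some (by rw [h₂', hd])
  rcases hb : b with _ | b₀
  · have := (insertRow_snd_eq_none_iff (x := y) (R := R)).1 (by rw [h₁, hb])
    grind
  · obtain ⟨-, hyb₀, hb₀⟩ := (insertRow_snd_eq_some_iff hR).1 (by rw [h₁, hb])
    exact .single (.of_rel (.first_between (by omega) (by grind)))

theorem insertRowWord_last_between_of_mem {x y z a : ℕ} (hR : R.SortedLT) (hx : x ∉ R)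
    (hz : z ∉ R) (hxy : x < y) (hyz : y < z) (ha : a ∈ R) (hxa : x < a) (haz : a < z) :
    (insertRowWord R [x, z, y]).1 = (insertRowWord R [z, x, y]).1 ∧
      ReflGen (SymmGen KnuthCore) (insertRowWord R [x, z, y]).2 (insertRowWord R [z, x, y]).2 := by
  obtain ⟨R₁, a', h₁, s₁, m₁⟩ := exists_insertRow_eq (x := x) hR hx
  obtain ⟨R₂, e', h₂, s₂, m₂⟩ := exists_insertRow_eq (x := z) s₁ (by grind)
  obtain ⟨S₁, e, h₁', s₁', m₁'⟩ := exists_insertRow_eq (x := z) hR hz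
  obtain ⟨S₂, a'', h₂', s₂', m₂'⟩ := exists_insertRow_eq (x := x) s₁' (by grind)
  -- `x` bumps some `a₀ < z` and `z` an entry `e > z`, whichever goes first.
  obtain ⟨a₀, ha₀, ha'⟩ := exists_insertRow_snd_le hR ha hxa
  replace ha' : a' = some a₀ := by rwa [h₁] at ha'
  have he : ∀ e₀, e = some e₀ → z < e₀ ∧ ∀ r ∈ R, z < r → e₀ ≤ r := fun e₀ he₀ =>
    ((insertRow_snd_eq_some_iff hR).1 (by rw [h₁', he₀])).2
  have ha'' : a'' = some a₀ := by
    have := insertRow_snd_eq_of_mem_iff_of_le hR s₁' (by rw [h₁, ha']) fun r _ _ => by grind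
    rwa [h₂'] at this
  have he' : e' = e := by
    have := insertRow_snd_congr s₁ hR (x := z) (x' := z) fun r => by grind
    rwa [h₂, h₁'] at this
  subst ha' ha'' he'
  obtain rfl : R₂ = S₂ := s₂.eq_of_mem_iff s₂' fun r => by
    rw [m₂, m₂', m₁, m₁']
    grind
  simp only [insertRowWord, h₁, h₂, h₁', h₂', append_nil, true_and]
  -- `y` then bumps the same `f₀` from both rows, and `a₀ < f₀ ≤ z < e₀`.
  rcases e' with _ | e₀
  · exact .refl
  obtain ⟨f₀, hf₀z, hf⟩ := exists_insertRow_snd_le s₂ ((m₂ z).2 (.inl rfl)) hyz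
  rw [hf]
  have hf₀ := (insertRow_snd_eq_some_iff s₂).1 hf
  have := he e₀ rfl
  have := (insertRow_snd_eq_some_iff hR).1 (by rw [h₁])
  exact .single (.of_rel (.last_between (by grind) (by grind)))

theorem insertRowWord_last_between_of_forall {x y z : ℕ} (hR : R.SortedLT) (hx : x ∉ R)
    (hy : y ∉ R) (hz : z ∉ R) (hxy : x < y) (hyz : y < z) (hgap : ∀ r ∈ R, x < r → z < r) :
    (insertRowWord R [x, z, y]).1 = (insertRowWord R [z, x, y]).1 ∧
      ReflGen (SymmGen KnuthCore) (insertRowWord R [x, z, y]).2 (insertRowWord R [z, x, y]).2 := by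
  obtain ⟨R₁, a, h₁, s₁, m₁⟩ := exists_insertRow_eq (x := x) hR hx
  obtain ⟨R₂, g, h₂, s₂, m₂⟩ := exists_insertRow_eq (x := z) s₁ (by grind)
  obtain ⟨R₃, f, h₃, s₃, m₃⟩ := exists_insertRow_eq (x := y) s₂ (by grind)
  obtain ⟨S₁, e, h₁', s₁', m₁'⟩ := exists_insertRow_eq (x := z) hR hz
  obtain ⟨S₂, a', h₂', s₂', m₂'⟩ := exists_insertRow_eq (x := x) s₁' (by grind)
  obtain ⟨S₃, g', h₃', s₃', m₃'⟩ := exists_insertRow_eq (x := y) s₂' (by grind)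
  -- No entry of `R` lies between `x` and `z`, so both bump the same entry `e` of `R`. In the
  -- order `z x y`, `x` then bumps `z` and leaves the row `R₁`; in the order `x z y`, `y` bumps `z`.
  have ha : a = e := by
    have := insertRow_snd_congr hR hR (x := x) (x' := z) fun r => by grind
    rwa [h₁, h₁'] at this
  have ha' : a' = some z := by
    obtain ⟨a₀, -, ha₀⟩ := exists_insertRow_snd_le s₁' ((m₁' z).2 (.inl rfl)) (hxy.trans hyz)
    have := (insertRow_snd_eq_some_iff s₁').1 ha₀
    rw [h₂'] at ha₀
    grind
  subst ha ha'
  obtain rfl : S₂ = R₁ := s₂'.eq_of_mem_iff s₁ fun r => by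
    rw [m₂', m₁', m₁]
    grind
  have hf : f = some z := by
    obtain ⟨f₀, -, hf₀⟩ := exists_insertRow_snd_le s₂ ((m₂ z).2 (.inl rfl)) hyz
    have := (insertRow_snd_eq_some_iff s₂).1 hf₀
    rw [h₃] at hf₀
    grind
  have hg : g' = g := by
    have := insertRow_snd_congr s₂' s₂' (x := y) (x' := z) fun r => by grind
    rwa [h₃', h₂] at this
  subst hf hg
  simp only [insertRowWord, h₁, h₂, h₃, h₁', h₂', h₃', append_nil]
  refine ⟨s₃.eq_of_mem_iff s₃' fun r => ?_, ?_⟩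
  · rw [m₃, m₃', m₂]
    grind
  -- The bumped words are `e g z` and `e z g`, with `z < e < g` when `g` exists.
  rcases g' with _ | g₀
  · exact .refl
  have hg₀ := (insertRow_snd_eq_some_iff s₂').1 (by rw [h₂])
  rcases a with _ | e₀
  · have := (insertRow_snd_eq_none_iff (x := x) (R := R)).1 (by rw [h₁])
    grind
  have he₀ := (insertRow_snd_eq_some_iff hR).1 (by rw [h₁'])
  exact .single (.of_rel_symm (.first_between (by grind) (by grind)))

theorem insertRowWord_last_between {x y z : ℕ} (hR : R.SortedLT) (hx : x ∉ R)
    (hy : y ∉ R) (hz : z ∉ R) (hxy : x < y) (hyz : y < z) :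
    (insertRowWord R [x, z, y]).1 = (insertRowWord R [z, x, y]).1 ∧
      ReflGen (SymmGen KnuthCore) (insertRowWord R [x, z, y]).2 (insertRowWord R [z, x, y]).2 := by
  by_cases hgap : ∃ a ∈ R, x < a ∧ a < z
  · obtain ⟨a, ha, hxa, haz⟩ := hgap
    exact insertRowWord_last_between_of_mem hR hx hz hxy hyz ha hxa haz
  · push Not at hgap
    exact insertRowWord_last_between_of_forall hR hx hy hz hxy hyz fun r hr hxr =>
      (hgap r hr hxr).lt_of_ne (by rintro rfl; exact hz hr)

theorem insertRowWord_of_knuthCore (hR : R.SortedLT) (h : KnuthCore u v) (hu : ∀ a ∈ u, a ∉ R) :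
    (insertRowWord R u).1 = (insertRowWord R v).1 ∧
      ReflGen (SymmGen KnuthCore) (insertRowWord R u).2 (insertRowWord R v).2 := by
  cases h with
  | first_between hxy hyz =>
    exact insertRowWord_first_between hR (by grind) (by grind) (by grind) hxy hyz
  | last_between hxy hyz =>
    exact insertRowWord_last_between hR (by grind) (by grind) (by grind) hxy hyz

def IsRowStrict (T : List (List ℕ)) : Prop := (∀ R ∈ T, R.SortedLT) ∧ T.flatten.Nodup

theorem isRowStrict_cons {T : List (List ℕ)} :
    IsRowStrict (R :: T) ↔ R.SortedLT ∧ IsRowStrict T ∧ ∀ a ∈ R, a ∉ T.flatten := by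
  simp only [IsRowStrict, forall_mem_cons, flatten_cons, nodup_append]
  exact ⟨fun ⟨⟨hR, hT⟩, _, hTn, hd⟩ => ⟨hR, ⟨hT, hTn⟩, fun a ha haT => hd a ha a haT rfl⟩,
    fun ⟨hR, ⟨hT, hTn⟩, hd⟩ => ⟨⟨hR, hT⟩, hR.nodup, hTn, fun a ha b hb hab => hd a ha (hab ▸ hb)⟩⟩

theorem foldl_insertTab_eq_of_knuthCore {T : List (List ℕ)} (hT : IsRowStrict T)
    (h : KnuthCore u v) (hu : ∀ a ∈ u, a ∉ T.flatten) :
    u.foldl insertTab T = v.foldl insertTab T := by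
  induction T generalizing u v with
  | nil =>
    cases h with
    | first_between hxy hyz | last_between hxy hyz =>
      simp [insertTab, insertRow, hxy, hyz, hxy.trans hyz, not_lt_of_gt]
  | cons R T ih =>
    obtain ⟨hR, hT, hRT⟩ := isRowStrict_cons.1 hT
    obtain ⟨hrow, hbump⟩ := insertRowWord_of_knuthCore hR h fun a ha haR =>
      hu a ha (mem_flatten_of_mem mem_cons_self haR)
    rw [foldl_insertTab_cons, foldl_insertTab_cons, hrow]
    have fresh : ∀ {w : List ℕ}, w.Perm u → ∀ a ∈ (insertRowWord R w).2, a ∉ T.flatten :=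
      fun hw a ha => (mem_insertRowWord_snd ha).elim (hRT a) fun haw =>
        fun haT => hu a (hw.subset haw) (by simp [haT])
    rcases (reflGen_iff _ _ _).1 hbump with heq | hbump | hbump
    · rw [heq]
    · rw [ih hT hbump (fresh (.refl u))]
    · rw [ih hT hbump (fresh h.perm.symm)]

theorem perm_flatten_insertTab (T : List (List ℕ)) (x : ℕ) :
    (insertTab T x).flatten.Perm (x :: T.flatten) := by
  induction T generalizing x with
  | nil => simp [insertTab]
  | cons R T ih =>
    have hR := perm_insertRow x R
    rcases h : insertRow x R with ⟨R', _ | b⟩ <;> rw [h] at hR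
    · simpa [insertTab, h] using hR.append_right T.flatten
    · simp only [insertTab, h, flatten_cons]
      refine ((ih b).append_left R').trans ?_
      simpa using hR.append_right T.flatten

theorem IsRowStrict.insertTab {T : List (List ℕ)} (hT : IsRowStrict T) (hx : x ∉ T.flatten) :
    IsRowStrict (insertTab T x) := by
  refine ⟨fun R' hR' => ?_, (perm_flatten_insertTab T x).nodup_iff.2 (nodup_cons.2 ⟨hx, hT.2⟩)⟩
  induction T generalizing x with
  | nil => simp_all [_root_.insertTab, sortedLT_iff_pairwise]
  | cons R T ih =>
    obtain ⟨hR, hT, hRT⟩ := isRowStrict_cons.1 hT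
    have hxR : x ∉ R := fun h => hx (mem_flatten_of_mem mem_cons_self h)
    rcases h : insertRow x R with ⟨R'', _ | b⟩ <;>
      simp only [_root_.insertTab, h, mem_cons] at hR'
    · rcases hR' with rfl | hR'
      · simpa [h] using sortedLT_insertRow_fst hR hxR
      · exact hT.1 R' hR'
    · rcases hR' with rfl | hR'
      · simpa [h] using sortedLT_insertRow_fst hR hxR
      · have hb : b ∈ R := mem_of_insertRow_snd_eq_some (by rw [h])
        exact ih hT (hRT b hb) hR'

theorem ptab_append (l l' : List ℕ) : Ptab (l ++ l') = l'.foldl insertTab (Ptab l) :=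
  foldl_append ..

theorem perm_flatten_ptab (l : List ℕ) : (Ptab l).flatten.Perm l := by
  induction l using reverseRecOn with
  | nil => simp [Ptab]
  | append_singleton l x ih =>
    rw [ptab_append, foldl_cons, foldl_nil]
    exact (perm_flatten_insertTab _ x).trans ((ih.cons x).trans (perm_append_singleton x l).symm)

theorem isRowStrict_ptab {l : List ℕ} (hl : l.Nodup) : IsRowStrict (Ptab l) := by
  induction l using reverseRecOn with
  | nil => simp [Ptab, IsRowStrict]
  | append_singleton l x ih =>
    rw [nodup_append] at hl
    rw [ptab_append, foldl_cons, foldl_nil]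
    exact (ih hl.1).insertTab fun h => hl.2.2 x ((perm_flatten_ptab l).subset h) x (by simp) rfl

end Knuth

/-! ### Knuth equivalence of words -/

section Words

variable {x : ℕ} {l l' : List ℕ}

def KnuthMove (l l' : List ℕ) : Prop :=
  ∃ p u v s, SymmGen KnuthCore u v ∧ l = p ++ u ++ s ∧ l' = p ++ v ++ s

theorem KnuthMove.symm (h : KnuthMove l l') : KnuthMove l' l := by
  obtain ⟨p, u, v, s, huv, rfl, rfl⟩ := h
  exact ⟨p, v, u, s, huv.symm, rfl, rfl⟩

theorem KnuthMove.perm (h : KnuthMove l l') : l.Perm l' := by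
  obtain ⟨p, u, v, s, huv | huv, rfl, rfl⟩ := h
  · exact (huv.perm.append_left p).append_right s
  · exact (huv.perm.symm.append_left p).append_right s

theorem KnuthMove.append_left_right (h : KnuthMove l l') (p s : List ℕ) :
    KnuthMove (p ++ l ++ s) (p ++ l' ++ s) := by
  obtain ⟨q, u, v, t, huv, rfl, rfl⟩ := h
  exact ⟨p ++ q, u, v, t ++ s, huv, by simp, by simp⟩

theorem reflTransGen_knuthMove_symm (h : ReflTransGen KnuthMove l l') :
    ReflTransGen KnuthMove l' l := by
  induction h with
  | refl => rfl
  | tail _ hstep ih => exact ih.head hstep.symm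

theorem reflTransGen_knuthMove_append_left_right (h : ReflTransGen KnuthMove l l')
    (p s : List ℕ) : ReflTransGen KnuthMove (p ++ l ++ s) (p ++ l' ++ s) :=
  h.lift (fun l => p ++ l ++ s) fun _ _ hstep => hstep.append_left_right p s

theorem perm_of_reflTransGen_knuthMove (h : ReflTransGen KnuthMove l l') : l.Perm l' := by
  induction h with
  | refl => rfl
  | tail _ hstep ih => exact ih.trans hstep.perm

theorem ptab_eq_of_knuthMove (hl : l.Nodup) (h : KnuthMove l l') : Ptab l = Ptab l' := by
  obtain ⟨p, u, v, s, huv, rfl, rfl⟩ := h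
  rw [append_assoc, nodup_append] at hl
  have hp := isRowStrict_ptab hl.1
  have fresh : ∀ a ∈ u, a ∉ (Ptab p).flatten := fun a ha hap =>
    hl.2.2 a ((perm_flatten_ptab p).subset hap) a (mem_append_left s ha) rfl
  simp only [ptab_append]
  congr 1
  rcases huv with huv | huv
  · exact foldl_insertTab_eq_of_knuthCore hp huv fresh
  · exact (foldl_insertTab_eq_of_knuthCore hp huv fun a ha => fresh a (huv.perm.subset ha)).symm

theorem ptab_eq_of_reflTransGen (hl : l.Nodup) (h : ReflTransGen KnuthMove l l') :
    Ptab l = Ptab l' := by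
  induction h with
  | refl => rfl
  | tail hll' hstep ih =>
    exact ih.trans
      (ptab_eq_of_knuthMove ((perm_of_reflTransGen_knuthMove hll').nodup_iff.1 hl) hstep)

theorem reflTransGen_knuthMove_slide_larger {g x : ℕ} {B : List ℕ} (hxg : x < g)
    (hgB : ∀ e ∈ B, g < e) (hB : B.SortedLT) :
    ReflTransGen KnuthMove (g :: x :: B) (g :: (B ++ [x])) := by
  induction B generalizing g with
  | nil => rfl
  | cons e B ih =>
    rw [sortedLT_iff_pairwise, pairwise_cons] at hB
    have hge := hgB e mem_cons_self
    have step : KnuthMove (g :: x :: e :: B) (g :: e :: x :: B) :=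
      ⟨[], [g, x, e], [g, e, x], B, .of_rel (.first_between hxg hge), rfl, rfl⟩
    exact .head step <| by
      simpa using reflTransGen_knuthMove_append_left_right
        (ih (hxg.trans hge) hB.1 hB.2.sortedLT) [g] []

theorem reflTransGen_knuthMove_slide_smaller {b x : ℕ} {A : List ℕ} (hAx : ∀ a ∈ A, a < x)
    (hxb : x < b) (hA : A.SortedLT) :
    ReflTransGen KnuthMove (b :: (A ++ [x])) (A ++ [b, x]) := by
  induction A with
  | nil => rfl
  | cons a A ih =>
    rw [sortedLT_iff_pairwise, pairwise_cons] at hA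
    obtain ⟨h, t, hht, hah, hhb⟩ : ∃ h t, A ++ [x] = h :: t ∧ a < h ∧ h < b := by
      rcases A with _ | ⟨h, t⟩
      · exact ⟨x, [], rfl, hAx a mem_cons_self, hxb⟩
      · exact ⟨h, t ++ [x], rfl, hA.1 h mem_cons_self, (hAx h (by simp)).trans hxb⟩
    have step : KnuthMove (b :: a :: (A ++ [x])) (a :: b :: (A ++ [x])) := by
      rw [hht]
      exact ⟨[], [b, a, h], [a, b, h], t, .of_rel_symm (.last_between hah hhb), rfl, rfl⟩
    exact .head step <| by
      simpa using reflTransGen_knuthMove_append_left_right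
        (ih (fun a ha => hAx a (mem_cons_of_mem _ ha)) hA.2.sortedLT) [a] []

def readingWord (T : List (List ℕ)) : List ℕ := T.reverse.flatten

theorem readingWord_cons (R : List ℕ) (T : List (List ℕ)) :
    readingWord (R :: T) = readingWord T ++ R := by
  simp [readingWord]

theorem reflTransGen_readingWord_insertTab {T : List (List ℕ)} (hT : IsRowStrict T)
    (hx : x ∉ T.flatten) :
    ReflTransGen KnuthMove (readingWord T ++ [x]) (readingWord (insertTab T x)) := by
  induction T generalizing x with
  | nil => rfl
  | cons R T ih =>
    rw [isRowStrict_cons] at hT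
    obtain ⟨hR, hT, hRT⟩ := hT
    obtain ⟨A, B, rfl, hA, hB⟩ := exists_eq_append_of_sortedLT (x := x) hR fun h => hx (by simp [h])
    have hAs : A.SortedLT := (hR.pairwise.sublist (sublist_append_left A B)).sortedLT
    rcases B with _ | ⟨b, B⟩
    · have e : insertRow x A = (A ++ [x], none) := by
        simpa [insertRow] using insertRow_append_of_forall_lt hA []
      simp only [append_nil, insertTab, e, readingWord_cons, append_assoc]
      rfl
    · have hbB := pairwise_cons.1 (hR.pairwise.sublist (sublist_append_right A (b :: B)))
      have hxb := hB b mem_cons_self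
      have e : insertRow x (A ++ b :: B) = (A ++ x :: B, some b) := by
        simp [insertRow_append_of_forall_lt hA, insertRow, hxb]
      simp only [insertTab, e, readingWord_cons]
      have hslide_x := reflTransGen_knuthMove_symm <| reflTransGen_knuthMove_append_left_right
        (reflTransGen_knuthMove_slide_larger hxb hbB.1 hbB.2.sortedLT) (readingWord T ++ A) []
      have hslide_b := reflTransGen_knuthMove_symm <| reflTransGen_knuthMove_append_left_right
        (reflTransGen_knuthMove_slide_smaller hA hxb hAs) (readingWord T) B
      have hbelow := reflTransGen_knuthMove_append_left_right
        (ih hT (hRT b (by simp))) [] (A ++ x :: B)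
      simp only [append_assoc, cons_append, nil_append, append_nil] at hslide_x hslide_b hbelow ⊢
      exact hslide_x.trans (hslide_b.trans hbelow)

theorem reflTransGen_readingWord_ptab (hl : l.Nodup) :
    ReflTransGen KnuthMove l (readingWord (Ptab l)) := by
  induction l using reverseRecOn with
  | nil => rfl
  | append_singleton l x ih =>
    rw [nodup_append] at hl
    rw [ptab_append, foldl_cons, foldl_nil]
    exact (reflTransGen_knuthMove_append_left_right (ih hl.1) [] [x]).trans
      (reflTransGen_readingWord_insertTab (isRowStrict_ptab hl.1)
        fun h => hl.2.2 x ((perm_flatten_ptab l).subset h) x (by simp) rfl)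

theorem ptab_eq_ptab_iff (hl : l.Nodup) (hl' : l'.Nodup) :
    Ptab l = Ptab l' ↔ ReflTransGen KnuthMove l l' :=
  ⟨fun h => (reflTransGen_readingWord_ptab hl).trans
    (h ▸ reflTransGen_knuthMove_symm (reflTransGen_readingWord_ptab hl')),
    ptab_eq_of_reflTransGen hl⟩

theorem knuthMove_iff :
    KnuthMove l l' ↔ ∃ p s : List ℕ, ∃ a b c : ℕ,
      (l = p ++ a :: b :: c :: s ∧ l' = p ++ a :: c :: b :: s ∧ StrictlyBetween a b c) ∨
      (l = p ++ b :: c :: a :: s ∧ l' = p ++ c :: b :: a :: s ∧ StrictlyBetween a b c) := by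
  simp only [StrictlyBetween, Nat.cast_lt]
  constructor
  · rintro ⟨p, u, v, s, h | h, rfl, rfl⟩ <;> cases h
    case inl.first_between x y z hxy hyz => exact ⟨p, s, y, x, z, .inl ⟨by simp, by simp, by omega⟩⟩
    case inl.last_between x y z hxy hyz => exact ⟨p, s, y, x, z, .inr ⟨by simp, by simp, by omega⟩⟩
    case inr.first_between x y z hxy hyz => exact ⟨p, s, y, z, x, .inl ⟨by simp, by simp, by omega⟩⟩
    case inr.last_between x y z hxy hyz => exact ⟨p, s, y, z, x, .inr ⟨by simp, by simp, by omega⟩⟩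
  · rintro ⟨p, s, a, b, c, ⟨rfl, rfl, h | h⟩ | ⟨rfl, rfl, h | h⟩⟩
    · exact ⟨p, [a, b, c], [a, c, b], s, .of_rel (.first_between h.1 h.2), by simp, by simp⟩
    · exact ⟨p, [a, b, c], [a, c, b], s, .of_rel_symm (.first_between h.1 h.2), by simp, by simp⟩
    · exact ⟨p, [b, c, a], [c, b, a], s, .of_rel (.last_between h.1 h.2), by simp, by simp⟩
    · exact ⟨p, [b, c, a], [c, b, a], s, .of_rel_symm (.last_between h.1 h.2), by simp, by simp⟩

end Words

/-! ### Permutations and their one-line notation -/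

section Perm

variable {n : ℕ} {w v : Equiv.Perm ℤ} {l : List ℕ}

-- `oneLine` coerces `range' 1 n` to `List ℤ` through the list monad.
theorem oneLine_eq_map (n : ℕ) (w : Equiv.Perm ℤ) :
    oneLine n w = (range' 1 n).map fun i : ℕ => (w i).toNat := by
  unfold oneLine
  induction range' 1 n <;> simp_all

theorem getElem?_oneLine (n : ℕ) (w : Equiv.Perm ℤ) (i : ℕ) :
    (oneLine n w)[i]? = if i < n then some (w (i + 1)).toNat else none := by
  rw [oneLine_eq_map, getElem?_map]
  split_ifs with h
  · simp [getElem?_range' h, Nat.add_comm 1]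
  · simpa using h

theorem length_oneLine (n : ℕ) (w : Equiv.Perm ℤ) : (oneLine n w).length = n := by
  simp [oneLine_eq_map]

theorem length_eq_of_oneLine_eq (h : oneLine n w = l) : l.length = n :=
  h ▸ length_oneLine n w

theorem getElem?_append_cons_cons_swap {p s : List ℕ} {b c i : ℕ} (h₁ : i ≠ p.length)
    (h₂ : i ≠ p.length + 1) : (p ++ c :: b :: s)[i]? = (p ++ b :: c :: s)[i]? := by
  rcases lt_or_gt_of_ne h₁ with h | h
  · rw [getElem?_append_left h, getElem?_append_left h]
  · obtain ⟨k, rfl⟩ : ∃ k, i = p.length + 2 + k := ⟨i - p.length - 2, by omega⟩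
    rw [getElem?_append_right (by omega), getElem?_append_right (by omega),
      show p.length + 2 + k - p.length = k + 2 by omega]
    rfl

theorem oneLine_mul_aswap {p s : List ℕ} {b c : ℕ} (h : oneLine n w = p ++ b :: c :: s) :
    oneLine n (w * aswap (p.length + 1)) = p ++ c :: b :: s := by
  have hn := length_eq_of_oneLine_eq h
  simp only [length_append, length_cons] at hn
  have hw k := (getElem?_oneLine n w k).symm.trans (congrArg (·[k]?) h)
  refine ext_getElem? fun i => ?_
  rw [getElem?_oneLine, Equiv.Perm.mul_apply, aswap]
  push_cast
  by_cases hi₁ : i = p.length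
  · subst hi₁
    have := hw (p.length + 1)
    rw [if_pos (by omega)] at this
    rw [Equiv.swap_apply_left, if_pos (by omega)]
    simpa using this
  by_cases hi₂ : i = p.length + 1
  · subst hi₂
    have := hw p.length
    rw [if_pos (by omega)] at this
    rw [Nat.cast_add_one, Equiv.swap_apply_right, if_pos (by omega)]
    simpa using this
  rw [getElem?_append_cons_cons_swap hi₁ hi₂, ← hw,
    Equiv.swap_apply_of_ne_of_ne (by omega) (by omega)]

theorem apply_mem_Icc_of_mem_sgrp (hw : w ∈ Sgrp n) {i : ℤ} (hi : i ∈ Set.Icc 1 (n : ℤ)) :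
    w i ∈ Set.Icc 1 (n : ℤ) := by
  by_contra h
  have := w.injective (hw (w i) (by simp only [Set.mem_Icc] at h; omega))
  simp_all

theorem mul_aswap_mem_sgrp (hw : w ∈ Sgrp n) {j : ℕ} (hj₁ : 1 ≤ j) (hj₂ : j + 1 ≤ n) :
    w * aswap j ∈ Sgrp n := by
  intro i hi
  rw [Equiv.Perm.mul_apply, aswap, Equiv.swap_apply_of_ne_of_ne (by omega) (by omega), hw i hi]

theorem mem_sgrp_of_knuthStep (hw : w ∈ Sgrp n) (h : KnuthStep n w v) : v ∈ Sgrp n := by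
  obtain ⟨j, hj₁, hj₂, rfl, -⟩ := h
  exact mul_aswap_mem_sgrp hw hj₁ hj₂

theorem apply_eq_of_oneLine_eq {p s : List ℕ} {b : ℕ} {i : ℤ} (hw : w ∈ Sgrp n)
    (h : oneLine n w = p ++ b :: s) (hi : i = p.length + 1) : w i = b := by
  subst hi
  have hp : p.length < n := by
    have := length_eq_of_oneLine_eq h
    simp only [length_append, length_cons] at this
    omega
  have hb := (getElem?_oneLine n w p.length).symm.trans (congrArg (·[p.length]?) h)
  rw [if_pos hp] at hb
  have := apply_mem_Icc_of_mem_sgrp hw (i := p.length + 1) ⟨by omega, by omega⟩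
  simp only [getElem?_append_right le_rfl, Nat.sub_self, getElem?_cons_zero,
    Option.some.injEq] at hb
  simp only [Set.mem_Icc] at this
  omega

theorem nodup_oneLine (hw : w ∈ Sgrp n) : (oneLine n w).Nodup := by
  rw [oneLine_eq_map]
  refine Nodup.map_on (fun a ha b hb hab => ?_) nodup_range'
  rw [mem_range'_1] at ha hb
  have := apply_mem_Icc_of_mem_sgrp hw (i := a) ⟨by omega, by omega⟩
  have := apply_mem_Icc_of_mem_sgrp hw (i := b) ⟨by omega, by omega⟩
  simp only [Set.mem_Icc] at *
  exact_mod_cast w.injective (by omega : w a = w b)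

theorem eq_of_oneLine_eq (hw : w ∈ Sgrp n) (hv : v ∈ Sgrp n) (h : oneLine n w = oneLine n v) :
    w = v := by
  ext i
  by_cases hi : 1 ≤ i ∧ i ≤ n
  · obtain ⟨k, rfl⟩ : ∃ k : ℕ, i = k + 1 := ⟨(i - 1).toNat, by omega⟩
    have hk := congrArg (·[k]?) h
    simp only [getElem?_oneLine, if_pos (show k < n by omega), Option.some.injEq] at hk
    have := apply_mem_Icc_of_mem_sgrp hw (i := k + 1) ⟨by omega, by omega⟩
    have := apply_mem_Icc_of_mem_sgrp hv (i := k + 1) ⟨by omega, by omega⟩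
    simp only [Set.mem_Icc] at *
    omega
  · rw [hw i (by omega), hv i (by omega)]

theorem exists_eq_append_cons₃ (l : List ℕ) {k : ℕ} (hk : k + 3 ≤ l.length) :
    ∃ p s : List ℕ, ∃ a b c : ℕ, l = p ++ a :: b :: c :: s ∧ p.length = k := by
  obtain ⟨a, b, c, s, hs⟩ : ∃ a b c s, l.drop k = a :: b :: c :: s := by
    match l.drop k, (by simp; omega : 3 ≤ (l.drop k).length) with
    | a :: b :: c :: s, _ => exact ⟨a, b, c, s, rfl⟩
  exact ⟨l.take k, s, a, b, c, by rw [← hs, take_append_drop], by simp; omega⟩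

theorem strictlyBetween_iff_of_oneLine_eq_first {p s : List ℕ} {a b c : ℕ} (hw : w ∈ Sgrp n)
    (h : oneLine n w = p ++ a :: b :: c :: s) :
    StrictlyBetween (w ((p.length + 2 : ℕ) - 1)) (w (p.length + 2 : ℕ)) (w ((p.length + 2 : ℕ) + 1))
      ↔ StrictlyBetween a b c := by
  rw [apply_eq_of_oneLine_eq hw (i := (p.length + 2 : ℕ) - 1) h (by push_cast; ring),
    apply_eq_of_oneLine_eq hw (i := (p.length + 2 : ℕ)) (p := p ++ [a]) (by simpa using h)
      (by simp; ring),
    apply_eq_of_oneLine_eq hw (i := (p.length + 2 : ℕ) + 1) (p := p ++ [a, b]) (by simpa using h)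
      (by simp)]

theorem strictlyBetween_iff_of_oneLine_eq_last {p s : List ℕ} {a b c : ℕ} (hw : w ∈ Sgrp n)
    (h : oneLine n w = p ++ b :: c :: a :: s) :
    StrictlyBetween (w ((p.length + 1 : ℕ) + 2)) (w (p.length + 1 : ℕ)) (w ((p.length + 1 : ℕ) + 1))
      ↔ StrictlyBetween a b c := by
  rw [apply_eq_of_oneLine_eq hw (i := (p.length + 1 : ℕ)) h (by push_cast; ring),
    apply_eq_of_oneLine_eq hw (i := (p.length + 1 : ℕ) + 1) (p := p ++ [b]) (by simpa using h)
      (by simp),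
    apply_eq_of_oneLine_eq hw (i := (p.length + 1 : ℕ) + 2) (p := p ++ [b, c]) (by simpa using h)
      (by simp; ring)]

theorem knuthMove_oneLine_of_knuthStep (hw : w ∈ Sgrp n) (h : KnuthStep n w v) :
    KnuthMove (oneLine n w) (oneLine n v) := by
  obtain ⟨j, hj₁, hj₂, rfl, hcase⟩ := h
  rw [knuthMove_iff]
  rcases hcase with ⟨hj, hbtw⟩ | ⟨hj, hbtw⟩
  · obtain ⟨p, s, a, b, c, hl, hp⟩ :=
      exists_eq_append_cons₃ (oneLine n w) (k := j - 2) (by rw [length_oneLine]; omega)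
    obtain rfl : j = p.length + 2 := by omega
    exact ⟨p, s, a, b, c, .inl ⟨hl,
      by simpa using oneLine_mul_aswap (p := p ++ [a]) (by simpa using hl),
      (strictlyBetween_iff_of_oneLine_eq_first hw hl).1 hbtw⟩⟩
  · obtain ⟨p, s, b, c, a, hl, hp⟩ :=
      exists_eq_append_cons₃ (oneLine n w) (k := j - 1) (by rw [length_oneLine]; omega)
    obtain rfl : j = p.length + 1 := by omega
    exact ⟨p, s, a, b, c, .inr ⟨hl, by simpa using oneLine_mul_aswap (p := p) (by simpa using hl),
      (strictlyBetween_iff_of_oneLine_eq_last hw hl).1 hbtw⟩⟩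

theorem exists_knuthStep_of_knuthMove (hw : w ∈ Sgrp n) (h : KnuthMove (oneLine n w) l) :
    ∃ v, KnuthStep n w v ∧ oneLine n v = l := by
  rw [knuthMove_iff] at h
  obtain ⟨p, s, a, b, c, ⟨hl, rfl, hbtw⟩ | ⟨hl, rfl, hbtw⟩⟩ := h
  all_goals have hn := length_eq_of_oneLine_eq hl; simp only [length_append, length_cons] at hn
  · exact ⟨w * aswap (p.length + 2), ⟨p.length + 2, by omega, by omega, rfl,
      .inl ⟨by omega, (strictlyBetween_iff_of_oneLine_eq_first hw hl).2 hbtw⟩⟩,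
      by simpa using oneLine_mul_aswap (p := p ++ [a]) (by simpa using hl)⟩
  · exact ⟨w * aswap (p.length + 1), ⟨p.length + 1, by omega, by omega, rfl,
      .inr ⟨by omega, (strictlyBetween_iff_of_oneLine_eq_last hw hl).2 hbtw⟩⟩,
      by simpa using oneLine_mul_aswap (p := p) (by simpa using hl)⟩

theorem reflTransGen_knuthMove_oneLine (hw : w ∈ Sgrp n) (h : ReflTransGen (KnuthStep n) w v) :
    ReflTransGen KnuthMove (oneLine n w) (oneLine n v) := by
  induction h using ReflTransGen.head_induction_on with
  | refl => rfl
  | head hstep _ ih =>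
    exact .head (knuthMove_oneLine_of_knuthStep hw hstep) (ih (mem_sgrp_of_knuthStep hw hstep))

theorem reflTransGen_knuthStep_of_knuthMove (hw : w ∈ Sgrp n) (hv : v ∈ Sgrp n)
    (h : ReflTransGen KnuthMove (oneLine n w) (oneLine n v)) : ReflTransGen (KnuthStep n) w v := by
  generalize hl : oneLine n w = l at h
  induction h using ReflTransGen.head_induction_on generalizing w with
  | refl => rw [eq_of_oneLine_eq hw hv hl]
  | head hstep _ ih =>
    obtain ⟨u, hu, rfl⟩ := exists_knuthStep_of_knuthMove hw (hl ▸ hstep)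
    exact .head hu (ih (mem_sgrp_of_knuthStep hw hu) rfl)

end Perm

end RobinsonSchensted

/-- Two permutations in `S_n` have the same Robinson–Schensted insertion tableau
iff they are connected by a sequence of Knuth relations. -/
theorem same_P_iff_knuth_connected (n : ℕ) (w v : Equiv.Perm ℤ)
    (hw : w ∈ Sgrp n) (hv : v ∈ Sgrp n) :
    Ptab (oneLine n w) = Ptab (oneLine n v) ↔
      Relation.ReflTransGen (KnuthStep n) w v := by
  rw [RobinsonSchensted.ptab_eq_ptab_iff (RobinsonSchensted.nodup_oneLine hw)
    (RobinsonSchensted.nodup_oneLine hv)]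
  exact ⟨RobinsonSchensted.reflTransGen_knuthStep_of_knuthMove hw hv,
    RobinsonSchensted.reflTransGen_knuthMove_oneLine hw⟩
end

section
/- For a signed permutation w ∈ W_n and 1 ≤ k ≤ n-1, w lies in the domain D^k_{IN}(W_n) of the operator T^k_{IN} if and only if w(k) and w(k+1) have opposite signs. -/
/-!
The Coxeter length of `W_n` is the statistic `inv(w(1), …, w(n)) + #{i ≤ j | w(i) + w(j) < 0}`
(Björner–Brenti, Prop. 8.1.1): each simple reflection changes it by exactly one, and every
`w ≠ 1` has a simple reflection lowering it. Reading descents off this statistic,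
`α_{k+1} ∈ τ^k(w)` iff `w(k) > w(k+1)`, and `α'_k ∈ τ^k(w)` iff `w(k) < 0`, since flipping the
sign of a positive entry can only create inversions. As `w s_k` swaps the entries `w(k)` and
`w(k+1)`, the two membership patterns say exactly `w(k) < 0 < w(k+1)` or `w(k+1) < 0 < w(k)`.
-/

/-- The signed transposition `s_j` of type `B`: swaps `j ↔ j+1` and `-j ↔ -(j+1)`. -/
def sgen (j : ℕ) : Equiv.Perm ℤ :=
  Equiv.swap (j : ℤ) ((j : ℤ) + 1) * Equiv.swap (-(j : ℤ)) (-((j : ℤ) + 1))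

/-- The sign change `t_j`: swaps `j ↔ -j`, i.e. changes the sign of the `j`-th entry. -/
def tgen (j : ℕ) : Equiv.Perm ℤ := Equiv.swap (j : ℤ) (-(j : ℤ))

/-- The hyperoctahedral group `W_n`: permutations `w` of `{±1, …, ±n}` with `w(-i) = -w(i)`,
realized as permutations of `ℤ` commuting with negation and fixing `i` with `|i| > n`. -/
def Wgrp (n : ℕ) : Set (Equiv.Perm ℤ) :=
  {w | (∀ i : ℤ, w (-i) = - w i) ∧ ∀ i : ℤ, (n : ℤ) < |i| → w i = i}

/-- Coxeter length on `W_n` with respect to the simple reflections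
`s_1, …, s_{n-1}, t_1`: minimal length of a word in these generators. -/
noncomputable def lenB (n : ℕ) (w : Equiv.Perm ℤ) : ℕ :=
  sInf {k | ∃ l : List (Equiv.Perm ℤ), l.length = k ∧
    (∀ g ∈ l, (∃ j : ℕ, 1 ≤ j ∧ j < n ∧ g = sgen j) ∨ g = tgen 1) ∧ l.prod = w}

/-- `α_{k+1} ∈ τ^k(w)`, i.e. `ℓ(w s_k) < ℓ(w)` where `s_k = s_{α_{k+1}}`. -/
noncomputable def InTauS (n k : ℕ) (w : Equiv.Perm ℤ) : Prop :=
  lenB n (w * sgen k) < lenB n w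

/-- `α'_k ∈ τ^k(w)`, i.e. `ℓ(w t_k) < ℓ(w)` where `t_k = s_{α'_k}`. -/
noncomputable def InTauT (n k : ℕ) (w : Equiv.Perm ℤ) : Prop :=
  lenB n (w * tgen k) < lenB n w

open Equiv Finset

section Generators

variable {j : ℕ}

lemma sgen_apply_of_pos {x : ℤ} (hx : 0 < x) : sgen j x = swap (j : ℤ) (j + 1) x := by
  rw [sgen, Perm.mul_apply, swap_apply_of_ne_of_ne (x := x) (by omega) (by omega)]

lemma sgen_apply_neg (hj : 1 ≤ j) (x : ℤ) : sgen j (-x) = -sgen j x := by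
  simp only [sgen, Perm.mul_apply, swap_apply_def]
  split_ifs <;> omega

lemma sgen_mul_self (hj : 1 ≤ j) : sgen j * sgen j = 1 := by
  ext x
  simp only [sgen, Perm.mul_apply, swap_apply_def, Perm.one_apply]
  split_ifs <;> omega

lemma sgen_apply_self (hj : 1 ≤ j) : sgen j j = j + 1 := by
  rw [sgen_apply_of_pos (by omega), swap_apply_left]

lemma sgen_apply_add_one : sgen j (j + 1) = j := by
  rw [sgen_apply_of_pos (by omega), swap_apply_right]

lemma tgen_apply_of_pos {x : ℤ} (hx : 0 < x) : tgen j x = if x = j then -(j : ℤ) else x := by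
  rw [tgen, swap_apply_def]
  split_ifs <;> omega

lemma tgen_apply_neg (x : ℤ) : tgen j (-x) = -tgen j x := by
  simp only [tgen, swap_apply_def]
  split_ifs <;> omega

lemma tgen_mul_self : tgen j * tgen j = 1 :=
  swap_mul_self _ _

end Generators

namespace Wgrp

variable {n j : ℕ} {w : Perm ℤ}

lemma map_zero (hw : w ∈ Wgrp n) : w 0 = 0 := by
  have := hw.1 0
  rw [neg_zero] at this
  omega

lemma map_ne_zero (hw : w ∈ Wgrp n) {i : ℤ} (hi : i ≠ 0) : w i ≠ 0 :=
  fun h => hi (w.injective (h.trans (map_zero hw).symm))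

lemma abs_apply_le (hw : w ∈ Wgrp n) {i : ℤ} (hi : |i| ≤ n) : |w i| ≤ n := by
  by_contra! h
  have := w.injective (hw.2 (w i) h)
  rw [this] at h
  omega

lemma one_mem : (1 : Perm ℤ) ∈ Wgrp n :=
  ⟨fun _ => rfl, fun _ _ => rfl⟩

lemma mul_sgen_mem (hw : w ∈ Wgrp n) (hj : 1 ≤ j) (hjn : j < n) : w * sgen j ∈ Wgrp n := by
  refine ⟨fun i => by simp only [Perm.mul_apply, sgen_apply_neg hj, hw.1], fun i hi => ?_⟩
  have : sgen j i = i := by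
    simp only [sgen, Perm.mul_apply, swap_apply_def]
    rcases abs_cases i with ⟨_, _⟩ | ⟨_, _⟩ <;> split_ifs <;> omega
  rw [Perm.mul_apply, this, hw.2 i hi]

lemma mul_tgen_mem (hw : w ∈ Wgrp n) (hjn : j ≤ n) : w * tgen j ∈ Wgrp n := by
  refine ⟨fun i => by simp only [Perm.mul_apply, tgen_apply_neg, hw.1], fun i hi => ?_⟩
  have : tgen j i = i := by
    rw [tgen, swap_apply_def]
    rcases abs_cases i with ⟨_, _⟩ | ⟨_, _⟩ <;> split_ifs <;> omega
  rw [Perm.mul_apply, this, hw.2 i hi]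

lemma mul_tgen_apply_of_pos (hw : w ∈ Wgrp n) {a : ℤ} (ha : 0 < a) :
    (w * tgen j) a = if a = j then -w j else w a := by
  rw [Perm.mul_apply, tgen_apply_of_pos ha]
  split_ifs <;> simp only [hw.1]

lemma eq_one_of_forall_apply_lt_apply_add_one (hw : w ∈ Wgrp n)
    (h1 : 0 < w 1) (hmono : ∀ i : ℤ, 1 ≤ i → i < n → w i < w (i + 1)) : w = 1 := by
  have hgap : ∀ j i : ℤ, 1 ≤ j → j ≤ i → i ≤ n → w j + (i - j) ≤ w i := by
    intro j i hj hji
    induction i, hji using Int.leInduction with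
    | base => simp
    | succ m hm ih =>
      intro hmn
      have := hmono m (by omega) (by omega)
      have := ih (by omega)
      omega
  have hwn : w n ≤ n := (abs_le.mp (abs_apply_le hw (abs_of_nonneg n.cast_nonneg).le)).2
  have hfix : ∀ i : ℤ, 1 ≤ i → i ≤ n → w i = i := fun i hi hin => by
    have := hgap 1 i le_rfl hi hin
    have := hgap i n hi hin le_rfl
    omega
  ext i
  rw [Perm.one_apply]
  by_cases hin : |i| ≤ n
  · rcases lt_trichotomy i 0 with hi | rfl | hi
    · have := hw.1 (-i)
      rw [neg_neg, hfix (-i) (by omega) (by rw [abs_of_neg hi] at hin; omega)] at this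
      omega
    · exact map_zero hw
    · exact hfix i hi (by rwa [abs_of_pos hi] at hin)
  · exact hw.2 i (not_le.mp hin)

end Wgrp

lemma Finset.sum_add_sum_eq_of_eqOn_sdiff {ι M : Type*} [DecidableEq ι] [AddCommMonoid M]
    {s t : Finset ι} {f g : ι → M} (ht : t ⊆ s) (h : ∀ x ∈ s \ t, f x = g x) :
    ∑ x ∈ s, f x + ∑ x ∈ t, g x = ∑ x ∈ s, g x + ∑ x ∈ t, f x := by
  rw [← sum_sdiff ht (f := f), ← sum_sdiff ht (f := g), sum_congr rfl h, add_right_comm]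

lemma Equiv.Perm.sum_product_comp {ι M : Type*} [AddCommMonoid M] (σ : Perm ι) (s : Finset ι)
    (hs : {a | σ a ≠ a} ⊆ s) (f : ι × ι → M) :
    ∑ p ∈ s ×ˢ s, f (σ p.1, σ p.2) = ∑ p ∈ s ×ˢ s, f p := by
  rw [sum_product, sum_product, σ.sum_comp s (fun a => ∑ b ∈ s, f (a, σ b)) hs]
  exact sum_congr rfl fun a _ => σ.sum_comp s (fun b => f (a, b)) hs

lemma swap_succ_lt_swap_succ_iff {i a b : ℤ} (h : (a, b) ≠ (i, i + 1)) (h' : (a, b) ≠ (i + 1, i)) :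
    swap i (i + 1) a < swap i (i + 1) b ↔ a < b := by
  simp only [ne_eq, Prod.ext_iff, not_and] at h h'
  simp only [swap_apply_def]
  split_ifs <;> omega

lemma swap_succ_le_swap_succ_iff {i a b : ℤ} (h : (a, b) ≠ (i, i + 1)) (h' : (a, b) ≠ (i + 1, i)) :
    swap i (i + 1) a ≤ swap i (i + 1) b ↔ a ≤ b := by
  simp only [ne_eq, Prod.ext_iff, not_and] at h h'
  simp only [swap_apply_def]
  split_ifs <;> omega

/-- The contribution of the pair `p = (i, j)` to the type-B length
`ℓ(w) = inv(w(1), …, w(n)) + #{i ≤ j | w(i) + w(j) < 0}` (Björner–Brenti, Prop. 8.1.1). -/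
def invBTerm (w : Perm ℤ) (p : ℤ × ℤ) : ℕ :=
  (if p.1 < p.2 ∧ w p.2 < w p.1 then 1 else 0) + (if p.1 ≤ p.2 ∧ w p.1 + w p.2 < 0 then 1 else 0)

noncomputable def invB (n : ℕ) (w : Perm ℤ) : ℕ :=
  ∑ p ∈ Icc 1 (n : ℤ) ×ˢ Icc 1 (n : ℤ), invBTerm w p

section invB

variable {n j : ℕ}

lemma invB_one : invB n 1 = 0 :=
  sum_eq_zero fun p hp => by
    rw [mem_product, mem_Icc, mem_Icc] at hp
    rw [invBTerm, if_neg (fun h => lt_asymm h.1 h.2), if_neg (fun h => by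
      simp only [Perm.one_apply] at h; omega), add_zero]

lemma invB_mul_sgen_add (hj : 1 ≤ j) (hjn : j < n) (w : Perm ℤ) :
    invB n (w * sgen j) + (if w (j + 1) < w j then 1 else 0) =
      invB n w + (if w j < w (j + 1) then 1 else 0) := by
  set τ := swap (j : ℤ) (j + 1)
  set P := Icc 1 (n : ℤ) ×ˢ Icc 1 (n : ℤ)
  have hτ : {a | τ a ≠ a} ⊆ Icc 1 (n : ℤ) := fun a ha => by
    by_contra h
    rw [mem_coe, mem_Icc] at h
    exact ha (swap_apply_of_ne_of_ne (by omega) (by omega))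
  have hreindex : invB n (w * sgen j) = ∑ p ∈ P, invBTerm (w * τ) (τ p.1, τ p.2) := by
    rw [τ.sum_product_comp _ hτ (invBTerm (w * τ))]
    refine sum_congr rfl fun p hp => ?_
    rw [mem_product, mem_Icc, mem_Icc] at hp
    simp only [invBTerm, Perm.mul_apply, sgen_apply_of_pos (by omega : 0 < p.1),
      sgen_apply_of_pos (by omega : 0 < p.2), τ]
    rfl
  let T : Finset (ℤ × ℤ) := {((j : ℤ), (j : ℤ) + 1), ((j : ℤ) + 1, (j : ℤ))}
  have hT : T ⊆ P := by
    intro p hp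
    simp only [T, mem_insert, mem_singleton] at hp
    rcases hp with rfl | rfl <;> simp only [P, mem_product, mem_Icc] <;> omega
  -- reindexing by `τ` changes the relative order of the pair `(j, j + 1)` only
  have hoff : ∀ p ∈ P \ T, invBTerm (w * τ) (τ p.1, τ p.2) = invBTerm w p := by
    intro p hp
    simp only [T, mem_sdiff, mem_insert, mem_singleton, not_or] at hp
    simp only [invBTerm, Perm.mul_apply, swap_apply_self, τ,
      swap_succ_lt_swap_succ_iff hp.2.1 hp.2.2, swap_succ_le_swap_succ_iff hp.2.1 hp.2.2]
  have key := sum_add_sum_eq_of_eqOn_sdiff hT hoff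
  rw [sum_pair (by simp), sum_pair (by simp)] at key
  rw [hreindex, invB]
  generalize ∑ p ∈ P, invBTerm (w * τ) (τ p.1, τ p.2) = A at key ⊢
  generalize ∑ p ∈ P, invBTerm w p = B at key ⊢
  simp only [invBTerm, lt_add_iff_pos_right, zero_lt_one, true_and, le_add_iff_nonneg_right,
    zero_le_one, add_lt_iff_neg_left, Int.reduceLT, false_and, ↓reduceIte, add_le_iff_nonpos_right,
    Int.reduceLE, add_comm (w (j + 1)), add_zero, swap_apply_left, swap_apply_right, Perm.coe_mul,
    Function.comp_apply, zero_add, τ] at key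
  omega

lemma invBTerm_le_invBTerm_mul_tgen {k : ℕ} {w : Perm ℤ} (hw : w ∈ Wgrp n) (hk : 0 < w k)
    {a b : ℤ} (ha : 0 < a) (hb : 0 < b) :
    invBTerm w (a, b) ≤ invBTerm (w * tgen k) (a, b) := by
  rw [invBTerm, invBTerm, Wgrp.mul_tgen_apply_of_pos hw ha, Wgrp.mul_tgen_apply_of_pos hw hb]
  dsimp only
  split_ifs <;> subst_vars <;> omega

lemma invB_lt_invB_mul_tgen {k : ℕ} (hk : 1 ≤ k) (hkn : k ≤ n) {w : Perm ℤ} (hw : w ∈ Wgrp n)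
    (hwk : 0 < w k) : invB n w < invB n (w * tgen k) := by
  have hkP : ((k : ℤ), (k : ℤ)) ∈ Icc 1 (n : ℤ) ×ˢ Icc 1 (n : ℤ) := by
    simp only [mem_product, mem_Icc]
    omega
  refine sum_lt_sum (fun ⟨a, b⟩ hp => ?_) ⟨_, hkP, ?_⟩
  · rw [mem_product, mem_Icc, mem_Icc] at hp
    exact invBTerm_le_invBTerm_mul_tgen hw hwk (by omega) (by omega)
  · rw [invBTerm, invBTerm, Wgrp.mul_tgen_apply_of_pos hw (by omega)]
    dsimp only
    split_ifs <;> omega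

lemma invB_mul_tgen_one_add (hn : 1 ≤ n) {w : Perm ℤ} (hw : w ∈ Wgrp n) :
    invB n (w * tgen 1) + (if w 1 < 0 then 1 else 0) = invB n w + (if 0 < w 1 then 1 else 0) := by
  unfold invB
  set P := Icc 1 (n : ℤ) ×ˢ Icc 1 (n : ℤ)
  have h11 : {((1 : ℤ), (1 : ℤ))} ⊆ P := by
    simp only [singleton_subset_iff, P, mem_product, mem_Icc]
    omega
  have hoff : ∀ p ∈ P \ {(1, 1)}, invBTerm (w * tgen 1) p = invBTerm w p := by
    rintro ⟨a, b⟩ hp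
    simp only [P, mem_sdiff, mem_product, mem_Icc, mem_singleton, Prod.ext_iff] at hp
    rw [invBTerm, invBTerm, Wgrp.mul_tgen_apply_of_pos hw (by omega),
      Wgrp.mul_tgen_apply_of_pos hw (by omega), Nat.cast_one]
    dsimp only
    split_ifs <;> subst_vars <;> omega
  have key := sum_add_sum_eq_of_eqOn_sdiff h11 hoff
  rw [sum_singleton, sum_singleton, invBTerm, invBTerm, Wgrp.mul_tgen_apply_of_pos hw one_pos,
    Nat.cast_one] at key
  dsimp only at key
  split_ifs at key ⊢ <;> omega

end invB

def IsSimpleB (n : ℕ) (g : Perm ℤ) : Prop :=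
  (∃ j : ℕ, 1 ≤ j ∧ j < n ∧ g = sgen j) ∨ g = tgen 1

section Length

variable {n : ℕ} {w g : Perm ℤ}

lemma IsSimpleB.mul_self (hg : IsSimpleB n g) : g * g = 1 := by
  rcases hg with ⟨j, hj, -, rfl⟩ | rfl
  exacts [sgen_mul_self hj, tgen_mul_self]

lemma Wgrp.mul_simple_mem (hn : 1 ≤ n) (hw : w ∈ Wgrp n) (hg : IsSimpleB n g) :
    w * g ∈ Wgrp n := by
  rcases hg with ⟨j, hj, hjn, rfl⟩ | rfl
  exacts [mul_sgen_mem hw hj hjn, mul_tgen_mem hw hn]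

lemma invB_mul_simple_le (hn : 1 ≤ n) (hw : w ∈ Wgrp n) (hg : IsSimpleB n g) :
    invB n (w * g) ≤ invB n w + 1 := by
  rcases hg with ⟨j, hj, hjn, rfl⟩ | rfl
  · have := invB_mul_sgen_add hj hjn w
    split_ifs at this <;> omega
  · have := invB_mul_tgen_one_add hn hw
    split_ifs at this <;> omega

lemma exists_simple_invB_mul_lt (hn : 1 ≤ n) (hw : w ∈ Wgrp n) (hne : w ≠ 1) :
    ∃ g, IsSimpleB n g ∧ invB n (w * g) < invB n w := by
  by_contra! h
  refine hne (Wgrp.eq_one_of_forall_apply_lt_apply_add_one hw ?_ fun i hi hin => ?_)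
  · have := Wgrp.map_ne_zero hw one_ne_zero
    have := invB_mul_tgen_one_add hn hw
    have := h _ (Or.inr rfl)
    split_ifs at * <;> omega
  · lift i to ℕ using (by omega)
    have := w.injective.ne (by omega : (i : ℤ) ≠ i + 1)
    have := invB_mul_sgen_add (n := n) (j := i) (by omega) (by omega) w
    have := h _ (Or.inl ⟨i, by omega, by omega, rfl⟩)
    split_ifs at * <;> omega

lemma Wgrp.list_prod_mem (hn : 1 ≤ n) {l : List (Perm ℤ)} (hl : ∀ g ∈ l, IsSimpleB n g) :
    l.prod ∈ Wgrp n := by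
  induction l using List.reverseRecOn with
  | nil => exact Wgrp.one_mem
  | append_singleton l g ih =>
    rw [List.prod_append, List.prod_singleton]
    exact Wgrp.mul_simple_mem hn (ih fun g hg => hl g (by simp [hg])) (hl g (by simp))

lemma invB_prod_le_length (hn : 1 ≤ n) {l : List (Perm ℤ)} (hl : ∀ g ∈ l, IsSimpleB n g) :
    invB n l.prod ≤ l.length := by
  induction l using List.reverseRecOn with
  | nil => simp [invB_one]
  | append_singleton l g ih =>
    have hl' : ∀ g ∈ l, IsSimpleB n g := fun g hg => hl g (by simp [hg])
    have := invB_mul_simple_le hn (Wgrp.list_prod_mem hn hl') (hl g (by simp))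
    rw [List.prod_append, List.prod_singleton, List.length_append, List.length_singleton]
    have := ih hl'
    omega

lemma exists_simple_word (hn : 1 ≤ n) (hw : w ∈ Wgrp n) :
    ∃ l : List (Perm ℤ), l.length = invB n w ∧ (∀ g ∈ l, IsSimpleB n g) ∧ l.prod = w := by
  induction h : invB n w using Nat.strong_induction_on generalizing w with
  | _ m ih =>
    by_cases hw1 : w = 1
    · subst hw1
      exact ⟨[], by simp [← h, invB_one]⟩
    obtain ⟨g, hg, hlt⟩ := exists_simple_invB_mul_lt hn hw hw1
    obtain ⟨l, hlen, hl, hprod⟩ := ih _ (h ▸ hlt) (Wgrp.mul_simple_mem hn hw hg) rfl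
    refine ⟨l ++ [g], ?_, ?_, ?_⟩
    · have := invB_mul_simple_le hn (Wgrp.mul_simple_mem hn hw hg) hg
      rw [mul_assoc, hg.mul_self, mul_one] at this
      simp only [List.length_append, List.length_singleton]
      omega
    · simpa [or_imp, forall_and] using ⟨hl, hg⟩
    · rw [List.prod_append, List.prod_singleton, hprod, mul_assoc, hg.mul_self, mul_one]

lemma lenB_eq_invB (hn : 1 ≤ n) (hw : w ∈ Wgrp n) : lenB n w = invB n w := by
  obtain ⟨l, hlen, hl, rfl⟩ := exists_simple_word hn hw
  refine le_antisymm (Nat.sInf_le ⟨l, hlen, hl, rfl⟩) (le_csInf ⟨_, l, hlen, hl, rfl⟩ ?_)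
  rintro m ⟨l', rfl, hl', hprod⟩
  exact hprod ▸ invB_prod_le_length hn hl'

end Length

section Descents

variable {n k : ℕ} {w : Perm ℤ}

lemma InTauS_iff (hk : 1 ≤ k) (hkn : k < n) (hw : w ∈ Wgrp n) :
    InTauS n k w ↔ w (k + 1) < w k := by
  have := w.injective.ne (by omega : (k : ℤ) ≠ k + 1)
  have := invB_mul_sgen_add hk hkn w
  rw [InTauS, lenB_eq_invB (by omega) (Wgrp.mul_sgen_mem hw hk hkn), lenB_eq_invB (by omega) hw]
  split_ifs at * <;> omega

lemma InTauT_iff (hk : 1 ≤ k) (hkn : k ≤ n) (hw : w ∈ Wgrp n) : InTauT n k w ↔ w k < 0 := by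
  have hwt := Wgrp.mul_tgen_mem hw hkn
  rw [InTauT, lenB_eq_invB (by omega) hwt, lenB_eq_invB (by omega) hw]
  rcases (Wgrp.map_ne_zero hw (i := k) (by omega)).lt_or_gt with hneg | hpos
  · refine iff_of_true ?_ hneg
    have := invB_lt_invB_mul_tgen hk hkn hwt
      (by rw [Wgrp.mul_tgen_apply_of_pos hw (by omega), if_pos rfl]; omega)
    rwa [mul_assoc, tgen_mul_self, mul_one] at this
  · exact iff_of_false (invB_lt_invB_mul_tgen hk hkn hw hpos).not_gt hpos.not_gt

end Descents

/-- `w` lies in the domain `D^k_{IN}(W_n)` of `T^k_{IN}` — i.e. for some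
`{δ,β} = {α_{k+1}, α'_k}`, `w ∈ D^k_{δβ}` and `w s_k ∈ D^k_{βδ}` — if and only
if `w(k)` and `w(k+1)` have opposite signs. -/
theorem mem_D_IN_iff (n k : ℕ) (hk1 : 1 ≤ k) (hk2 : k < n)
    (w : Equiv.Perm ℤ) (hw : w ∈ Wgrp n) :
    ((¬ InTauS n k w ∧ InTauT n k w ∧
        ¬ InTauT n k (w * sgen k) ∧ InTauS n k (w * sgen k)) ∨
     (InTauS n k w ∧ ¬ InTauT n k w ∧
        ¬ InTauS n k (w * sgen k) ∧ InTauT n k (w * sgen k))) ↔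
      w (k : ℤ) * w ((k : ℤ) + 1) < 0 := by
  have hws := Wgrp.mul_sgen_mem hw hk1 hk2
  rw [InTauS_iff hk1 hk2 hw, InTauT_iff hk1 hk2.le hw, InTauS_iff hk1 hk2 hws,
    InTauT_iff hk1 hk2.le hws, Perm.mul_apply, Perm.mul_apply,
    sgen_apply_self hk1, sgen_apply_add_one, mul_neg_iff]
  have := w.injective.ne (by omega : (k : ℤ) ≠ k + 1)
  have := Wgrp.map_ne_zero hw (i := k) (by omega)
  have := Wgrp.map_ne_zero hw (i := k + 1) (by omega)
  omega
end

section
/- A domino tableau T of rank r is somewhat special (i.e., all its non-core open cycles are boxed) if and only if all corners of T are empty; in particular, being somewhat special depends only on the shape of T. -/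
/-!
Write `F k` and `V k` for the fixed and the variable square of the domino `k`, and `X k` for
the square that `V k` moves to when `k` is moved through. Moving `k` through flips whether it
is boxed, and when `X k = V l` the labels force `F k` and `F l` onto opposite sides of that
square (one covered by it, the other covering it). Hence boxedness is constant along a cycle,
and `X` is injective.

If a non-core open cycle is not boxed, a square lost by moving it through with maximal `i + j`
is the variable square of a member of the cycle with no square of `T` to its right or below it,
and it lies in an odd row: it is a full corner. Conversely, nothing moves onto a full corner, so
the cycle of the corner domino is a chain `X l = V m` issuing from it. Moving this cycle through
vacates only the corner, so the shape changes, while the corner domino is not boxed.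
-/

/-- A standard domino tableau of rank `r` with `n` dominoes (1-indexed squares
`S_{i,j}`, `i,j ≥ 1`): the staircase core `{S_{i,j} : i+j < r+2}` is labeled `0`,
each label `1, …, n` occupies exactly two adjacent squares, labels increase
weakly along rows and columns, and the underlying shape is a Young diagram. -/
structure SDT (r n : ℕ) where
  cells : Finset (ℕ × ℕ)
  lab : ℕ × ℕ → ℕ
  lab_outside : ∀ c, c ∉ cells → lab c = 0
  pos_cells : ∀ c ∈ cells, 1 ≤ c.1 ∧ 1 ≤ c.2
  young_row : ∀ i j : ℕ, (i, j + 1) ∈ cells → 1 ≤ j → (i, j) ∈ cells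
  young_col : ∀ i j : ℕ, (i + 1, j) ∈ cells → 1 ≤ i → (i, j) ∈ cells
  core_mem : ∀ i j : ℕ, 1 ≤ i → 1 ≤ j → i + j < r + 2 → (i, j) ∈ cells
  core_zero : ∀ c ∈ cells, (lab c = 0 ↔ c.1 + c.2 < r + 2)
  lab_le : ∀ c ∈ cells, lab c ≤ n
  domino : ∀ k : ℕ, 1 ≤ k → k ≤ n → ∃ a b : ℕ × ℕ, a ∈ cells ∧ b ∈ cells ∧
    (b = (a.1 + 1, a.2) ∨ b = (a.1, a.2 + 1)) ∧ lab a = k ∧ lab b = k ∧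
    ∀ c ∈ cells, lab c = k → c = a ∨ c = b
  row_mono : ∀ i j : ℕ, (i, j) ∈ cells → (i, j + 1) ∈ cells →
    lab (i, j) ≤ lab (i, j + 1)
  col_mono : ∀ i j : ℕ, (i, j) ∈ cells → (i + 1, j) ∈ cells →
    lab (i, j) ≤ lab (i + 1, j)

/-- The support of the domino labeled `k` in `T`. -/
def SDT.supp {r n : ℕ} (T : SDT r n) (k : ℕ) : Finset (ℕ × ℕ) :=
  T.cells.filter (fun c => T.lab c = k)

/-- A square `S_{i,j}` is fixed if `i + j` has the opposite parity to `r`. -/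
def FixedSq (r : ℕ) (c : ℕ × ℕ) : Prop := (c.1 + c.2) % 2 ≠ r % 2

/-- A square is variable if it is not fixed, i.e. `i + j ≡ r (mod 2)`. -/
def VariableSq (r : ℕ) (c : ℕ × ℕ) : Prop := (c.1 + c.2) % 2 = r % 2

/-- A variable square in an odd row is of type `X`. -/
def TypeX (r : ℕ) (c : ℕ × ℕ) : Prop := VariableSq r c ∧ c.1 % 2 = 1

/-- Extended label: `0` on squares with a vanishing coordinate (i.e. `i ≤ 0` or
`j ≤ 0`), `∞` on positive squares outside `T`, and the label of `T` otherwise. -/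
def SDT.labE {r n : ℕ} (T : SDT r n) (c : ℕ × ℕ) : ℕ∞ :=
  if c.1 = 0 ∨ c.2 = 0 then 0 else if c ∈ T.cells then (T.lab c : ℕ∞) else ⊤

/-- Garfinkle's `D'(k,T)`: `s` is the support of the image of the domino labeled
`k` under moving through, defined by the case analysis on the position of the
fixed square of the domino. -/
def IsSuppD' {r n : ℕ} (T : SDT r n) (k : ℕ) (s : Finset (ℕ × ℕ)) : Prop :=
  ∃ i j : ℕ, FixedSq r (i, j) ∧
    (((T.supp k = {(i, j), (i + 1, j)} ∨ T.supp k = {(i, j - 1), (i, j)}) ∧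
        (((k : ℕ∞) < T.labE (i - 1, j + 1) ∧ s = {(i, j), (i - 1, j)}) ∨
         (T.labE (i - 1, j + 1) < (k : ℕ∞) ∧ s = {(i, j), (i, j + 1)}))) ∨
     ((T.supp k = {(i, j), (i - 1, j)} ∨ T.supp k = {(i, j + 1), (i, j)}) ∧
        (((k : ℕ∞) < T.labE (i + 1, j - 1) ∧ s = {(i, j), (i, j - 1)}) ∨
         (T.labE (i + 1, j - 1) < (k : ℕ∞) ∧ s = {(i, j), (i + 1, j)}))))

open Classical in
/-- The support of `D'(k,T)`. -/
noncomputable def suppD' {r n : ℕ} (T : SDT r n) (k : ℕ) : Finset (ℕ × ℕ) :=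
  if h : ∃ s, IsSuppD' T k s then h.choose else ∅

/-- One step of the relation generating the cycle: `l` and `m` interact if
`supp D(l) ∩ supp D'(m) ≠ ∅` or `supp D'(l) ∩ supp D(m) ≠ ∅`. -/
noncomputable def cycStep {r n : ℕ} (T : SDT r n) (m l : ℕ) : Prop :=
  (T.supp l ∩ suppD' T m).Nonempty ∨ (suppD' T l ∩ T.supp m).Nonempty

/-- The cycle `c(k,T)` through `k`: all labels of `T` reachable from `k` by the
interaction relation. -/
noncomputable def cyc {r n : ℕ} (T : SDT r n) (k : ℕ) : Set ℕ :=
  {l | 1 ≤ l ∧ l ≤ n ∧ Relation.ReflTransGen (cycStep T) k l}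

/-- `T'` is obtained from `T` by moving through the set of labels `c`: dominoes
in `c` move to their `D'` positions, all others stay. -/
noncomputable def IsMT {r n : ℕ} (T T' : SDT r n) (c : Set ℕ) : Prop :=
  (∀ l ∈ c, T'.supp l = suppD' T l) ∧
  ∀ l : ℕ, 1 ≤ l → l ≤ n → l ∉ c → T'.supp l = T.supp l

/-- `c` is a cycle of `T`. -/
noncomputable def IsCycle {r n : ℕ} (T : SDT r n) (c : Set ℕ) : Prop :=
  ∃ k : ℕ, 1 ≤ k ∧ k ≤ n ∧ c = cyc T k

/-- `c` is a non-core open cycle of `T`: moving through it yields a rank-`r`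
tableau (so the core is unchanged) of a different shape. -/
noncomputable def NonCoreOpen {r n : ℕ} (T : SDT r n) (c : Set ℕ) : Prop :=
  IsCycle T c ∧ ∃ T' : SDT r n, IsMT T T' c ∧ T'.cells ≠ T.cells

/-- A set of squares is boxed if it is contained in a block
`{S_{i,j}, S_{i+1,j}, S_{i,j+1}, S_{i+1,j+1}}` with `S_{i,j}` of type `X`. -/
def BoxedSet (r : ℕ) (s : Finset (ℕ × ℕ)) : Prop :=
  ∃ i j : ℕ, TypeX r (i, j) ∧
    ↑s ⊆ ({(i, j), (i + 1, j), (i, j + 1), (i + 1, j + 1)} : Set (ℕ × ℕ))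

/-- A domino tableau is somewhat special if all its non-core open cycles are
boxed. -/
noncomputable def SomewhatSpecial {r n : ℕ} (T : SDT r n) : Prop :=
  ∀ c, NonCoreOpen T c → ∀ l ∈ c, BoxedSet r (T.supp l)

/-- A corner of `T`: a square `S_{i,j}` of type `X` with neither `S_{i,j+1}` nor
`S_{i+1,j}` in `T`, and either both `S_{i-1,j}` and `S_{i,j-1}` in `T`, or
`S_{i-1,j} ∈ T` and `j = 1`, or `S_{i,j-1} ∈ T` and `i = 1`. -/
def IsTabCorner {r n : ℕ} (T : SDT r n) (i j : ℕ) : Prop :=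
  1 ≤ i ∧ 1 ≤ j ∧ TypeX r (i, j) ∧
    (i, j + 1) ∉ T.cells ∧ (i + 1, j) ∉ T.cells ∧
    (((i - 1, j) ∈ T.cells ∧ (i, j - 1) ∈ T.cells) ∨
     ((i - 1, j) ∈ T.cells ∧ j = 1) ∨ ((i, j - 1) ∈ T.cells ∧ i = 1))

theorem natProd_covBy_iff {a b : ℕ × ℕ} : a ⋖ b ↔ b = (a.1 + 1, a.2) ∨ b = (a.1, a.2 + 1) := by
  obtain ⟨a₁, a₂⟩ := a
  obtain ⟨b₁, b₂⟩ := b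
  simp only [Prod.mk_covBy_mk_iff, Nat.covBy_iff_add_one_eq, Prod.mk.injEq]
  omega

theorem CovBy.fst_add_snd_eq {a b : ℕ × ℕ} (h : a ⋖ b) : b.1 + b.2 = a.1 + a.2 + 1 := by
  rcases natProd_covBy_iff.1 h with rfl | rfl <;> simp only <;> omega

theorem CovBy.fixedSq_iff {r : ℕ} {a b : ℕ × ℕ} (h : a ⋖ b) :
    FixedSq r a ↔ VariableSq r b := by
  have := h.fst_add_snd_eq
  unfold FixedSq VariableSq
  omega

theorem CovBy.variableSq_iff {r : ℕ} {a b : ℕ × ℕ} (h : a ⋖ b) :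
    VariableSq r a ↔ FixedSq r b := by
  have := h.fst_add_snd_eq
  unfold FixedSq VariableSq
  omega

theorem FixedSq.ne {r : ℕ} {a b : ℕ × ℕ} (ha : FixedSq r a) (hb : VariableSq r b) : a ≠ b := by
  rintro rfl
  exact ha hb

theorem boxedSet_pair_iff {r : ℕ} {f v : ℕ × ℕ} (hv : VariableSq r v) (hf : 1 ≤ f.1 ∧ 1 ≤ f.2)
    (hfv : f ⋖ v ∨ v ⋖ f) : BoxedSet r {f, v} ↔ (v.1 % 2 = 1 ↔ v ⋖ f) := by
  obtain ⟨f₁, f₂⟩ := f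
  obtain ⟨v₁, v₂⟩ := v
  unfold VariableSq at hv
  simp only [natProd_covBy_iff, Prod.mk.injEq] at hfv hf hv ⊢
  have block_iff : ∀ i j, ↑({(f₁, f₂), (v₁, v₂)} : Finset (ℕ × ℕ)) ⊆
      ({(i, j), (i + 1, j), (i, j + 1), (i + 1, j + 1)} : Set (ℕ × ℕ)) ↔
      ((f₁ = i ∨ f₁ = i + 1) ∧ (f₂ = j ∨ f₂ = j + 1)) ∧
        ((v₁ = i ∨ v₁ = i + 1) ∧ (v₂ = j ∨ v₂ = j + 1)) := by
    intro i j
    simp only [Finset.coe_insert, Finset.coe_singleton, Set.insert_subset_iff,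
      Set.singleton_subset_iff, Set.mem_insert_iff, Set.mem_singleton_iff, Prod.mk.injEq]
    omega
  unfold BoxedSet TypeX VariableSq
  simp only [block_iff]
  constructor
  · rintro ⟨i, j, ⟨hij, hi⟩, hsub⟩
    omega
  · intro h
    rcases Nat.mod_two_eq_zero_or_one v₁ with hp | hp
    · rcases hfv with (hfv | hfv) | (hfv | hfv)
      · exact ⟨f₁, f₂ - 1, by omega⟩
      · exact ⟨f₁ - 1, f₂, by omega⟩
      all_goals omega
    · exact ⟨v₁, v₂, by omega⟩

theorem exists_domino_of_filter_eq {C : Finset (ℕ × ℕ)} {L : ℕ × ℕ → ℕ} {m : ℕ} {a b : ℕ × ℕ}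
    (h : C.filter (L · = m) = {a, b}) (hab : a ⋖ b ∨ b ⋖ a) :
    ∃ a b : ℕ × ℕ, a ∈ C ∧ b ∈ C ∧ (b = (a.1 + 1, a.2) ∨ b = (a.1, a.2 + 1)) ∧
      L a = m ∧ L b = m ∧ ∀ c ∈ C, L c = m → c = a ∨ c = b := by
  have hmem : ∀ z, z ∈ C ∧ L z = m ↔ z = a ∨ z = b := fun z => by
    simpa using Finset.ext_iff.1 h z
  obtain ⟨ha, hla⟩ := (hmem a).2 (Or.inl rfl)
  obtain ⟨hb, hlb⟩ := (hmem b).2 (Or.inr rfl)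
  rcases hab with hab | hab
  · exact ⟨a, b, ha, hb, natProd_covBy_iff.1 hab, hla, hlb, fun c hc hlc => (hmem c).1 ⟨hc, hlc⟩⟩
  · exact ⟨b, a, hb, ha, natProd_covBy_iff.1 hab, hlb, hla,
      fun c hc hlc => ((hmem c).1 ⟨hc, hlc⟩).symm⟩

namespace SDT

variable {r n : ℕ} (T : SDT r n)

theorem mem_cells_of_covBy {a b : ℕ × ℕ} (hab : a ⋖ b) (hb : b ∈ T.cells) (ha₁ : a.1 ≠ 0)
    (ha₂ : a.2 ≠ 0) : a ∈ T.cells := by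
  rcases natProd_covBy_iff.1 hab with rfl | rfl
  · exact T.young_col _ _ hb (Nat.one_le_iff_ne_zero.2 ha₁)
  · exact T.young_row _ _ hb (Nat.one_le_iff_ne_zero.2 ha₂)

theorem lab_le_of_covBy {a b : ℕ × ℕ} (hab : a ⋖ b) (ha : a ∈ T.cells) (hb : b ∈ T.cells) :
    T.lab a ≤ T.lab b := by
  rcases natProd_covBy_iff.1 hab with rfl | rfl
  · exact T.col_mono _ _ ha hb
  · exact T.row_mono _ _ ha hb

theorem noncore_of_lab_ne_zero {z : ℕ × ℕ} (hz : z ∈ T.cells) (h : T.lab z ≠ 0) :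
    r + 2 ≤ z.1 + z.2 := by
  have := T.core_zero z hz
  omega

theorem mem_supp {k : ℕ} {z : ℕ × ℕ} : z ∈ T.supp k ↔ z ∈ T.cells ∧ T.lab z = k :=
  Finset.mem_filter

theorem mem_supp_zero {z : ℕ × ℕ} :
    z ∈ T.supp 0 ↔ 1 ≤ z.1 ∧ 1 ≤ z.2 ∧ z.1 + z.2 < r + 2 := by
  rw [mem_supp]
  constructor
  · rintro ⟨hz, hlz⟩
    exact ⟨(T.pos_cells z hz).1, (T.pos_cells z hz).2, (T.core_zero z hz).1 hlz⟩
  · rintro ⟨h₁, h₂, h₃⟩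
    have hz := T.core_mem z.1 z.2 h₁ h₂ h₃
    exact ⟨hz, (T.core_zero z hz).2 h₃⟩

theorem labE_of_mem {z : ℕ × ℕ} (hz : z ∈ T.cells) : T.labE z = T.lab z := by
  obtain ⟨h₁, h₂⟩ := T.pos_cells z hz
  rw [labE, if_neg (by omega), if_pos hz]

theorem labE_of_eq_zero {z : ℕ × ℕ} (h : z.1 = 0 ∨ z.2 = 0) : T.labE z = 0 := by
  rw [labE, if_pos h]

theorem labE_of_not_mem {z : ℕ × ℕ} (h₁ : z.1 ≠ 0) (h₂ : z.2 ≠ 0) (hz : z ∉ T.cells) :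
    T.labE z = ⊤ := by
  rw [labE, if_neg (by omega), if_neg hz]

theorem mem_cells_of_labE_ne_top {z : ℕ × ℕ} (h₁ : z.1 ≠ 0) (h₂ : z.2 ≠ 0)
    (h : T.labE z ≠ ⊤) : z ∈ T.cells := by
  by_contra hz
  exact h (T.labE_of_not_mem h₁ h₂ hz)

theorem labE_le_of_covBy {a b : ℕ × ℕ} (hab : a ⋖ b) : T.labE a ≤ T.labE b := by
  by_cases ha : a.1 = 0 ∨ a.2 = 0
  · rw [T.labE_of_eq_zero ha]
    exact zero_le
  have hle : a.1 ≤ b.1 ∧ a.2 ≤ b.2 := hab.le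
  by_cases hb : b ∈ T.cells
  · have ha' := T.mem_cells_of_covBy hab hb (by omega) (by omega)
    rw [T.labE_of_mem ha', T.labE_of_mem hb]
    exact_mod_cast T.lab_le_of_covBy hab ha' hb
  · rw [T.labE_of_not_mem (by omega) (by omega) hb]
    exact le_top

theorem labE_monotone : Monotone T.labE := by
  rintro ⟨a, b⟩ ⟨c, d⟩ ⟨hac, hbd⟩
  have h₁ : Monotone fun i => T.labE (i, b) := monotone_nat_of_le_succ fun i =>
    T.labE_le_of_covBy (natProd_covBy_iff.2 (Or.inl rfl))
  have h₂ : Monotone fun j => T.labE (c, j) := monotone_nat_of_le_succ fun j =>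
    T.labE_le_of_covBy (natProd_covBy_iff.2 (Or.inr rfl))
  exact (h₁ hac).trans (h₂ hbd)

section

open Classical in
noncomputable def fsq (k : ℕ) : ℕ × ℕ :=
  if h : ∃ z ∈ T.supp k, FixedSq r z then h.choose else 0

open Classical in
noncomputable def vsq (k : ℕ) : ℕ × ℕ :=
  if h : ∃ z ∈ T.supp k, VariableSq r z then h.choose else 0

theorem exists_supp_eq_pair {k : ℕ} (hk : k ∈ Set.Icc 1 n) : ∃ f v, FixedSq r f ∧
    VariableSq r v ∧ (f ⋖ v ∨ v ⋖ f) ∧ T.supp k = {f, v} := by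
  obtain ⟨a, b, ha, hb, hab, hla, hlb, huniq⟩ := T.domino k hk.1 hk.2
  have hab' : a ⋖ b := natProd_covBy_iff.2 hab
  have hsupp : T.supp k = {a, b} := by
    ext z
    rw [mem_supp, Finset.mem_insert, Finset.mem_singleton]
    refine ⟨fun ⟨hz, hlz⟩ => huniq z hz hlz, ?_⟩
    rintro (rfl | rfl)
    exacts [⟨ha, hla⟩, ⟨hb, hlb⟩]
  by_cases hfix : FixedSq r a
  · exact ⟨a, b, hfix, hab'.fixedSq_iff.1 hfix, Or.inl hab', hsupp⟩
  · refine ⟨b, a, ?_, not_not.1 hfix, Or.inr hab', hsupp.trans (Finset.pair_comm _ _)⟩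
    exact hab'.variableSq_iff.1 (not_not.1 hfix)

theorem fsq_eq_of_supp_eq {k : ℕ} {a b : ℕ × ℕ} (h : T.supp k = {a, b}) (ha : FixedSq r a)
    (hb : VariableSq r b) : T.fsq k = a := by
  have hex : ∃ z ∈ T.supp k, FixedSq r z := ⟨a, h ▸ Finset.mem_insert_self a {b}, ha⟩
  obtain ⟨hmem, hfix⟩ := hex.choose_spec
  replace hmem : hex.choose = a ∨ hex.choose = b := by simpa [h] using hmem
  rw [fsq, dif_pos hex]
  exact hmem.resolve_right fun e => hfix (e ▸ hb)

theorem vsq_eq_of_supp_eq {k : ℕ} {a b : ℕ × ℕ} (h : T.supp k = {a, b}) (ha : FixedSq r a)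
    (hb : VariableSq r b) : T.vsq k = b := by
  have hex : ∃ z ∈ T.supp k, VariableSq r z := ⟨b, h ▸ by simp, hb⟩
  obtain ⟨hmem, hvar⟩ := hex.choose_spec
  replace hmem : hex.choose = a ∨ hex.choose = b := by simpa [h] using hmem
  rw [vsq, dif_pos hex]
  exact hmem.resolve_left fun e => ha (e ▸ hvar)

variable {k : ℕ} (hk : k ∈ Set.Icc 1 n)
include hk

theorem supp_eq_pair : T.supp k = {T.fsq k, T.vsq k} := by
  obtain ⟨f, v, hf, hv, -, h⟩ := T.exists_supp_eq_pair hk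
  rw [T.fsq_eq_of_supp_eq h hf hv, T.vsq_eq_of_supp_eq h hf hv, h]

theorem fixedSq_fsq : FixedSq r (T.fsq k) := by
  obtain ⟨f, v, hf, hv, -, h⟩ := T.exists_supp_eq_pair hk
  rwa [T.fsq_eq_of_supp_eq h hf hv]

theorem variableSq_vsq : VariableSq r (T.vsq k) := by
  obtain ⟨f, v, hf, hv, -, h⟩ := T.exists_supp_eq_pair hk
  rwa [T.vsq_eq_of_supp_eq h hf hv]

theorem fsq_covBy_or_covBy_fsq : T.fsq k ⋖ T.vsq k ∨ T.vsq k ⋖ T.fsq k := by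
  obtain ⟨f, v, hf, hv, hfv, h⟩ := T.exists_supp_eq_pair hk
  rwa [T.fsq_eq_of_supp_eq h hf hv, T.vsq_eq_of_supp_eq h hf hv]

theorem fsq_ne_vsq : T.fsq k ≠ T.vsq k := (T.fixedSq_fsq hk).ne (T.variableSq_vsq hk)

theorem fsq_mem_supp : T.fsq k ∈ T.supp k := by
  rw [T.supp_eq_pair hk]
  exact Finset.mem_insert_self _ _

theorem vsq_mem_supp : T.vsq k ∈ T.supp k := by
  rw [T.supp_eq_pair hk]
  exact Finset.mem_insert_of_mem (Finset.mem_singleton_self _)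

theorem fsq_mem_cells : T.fsq k ∈ T.cells := (T.mem_supp.1 (T.fsq_mem_supp hk)).1

theorem vsq_mem_cells : T.vsq k ∈ T.cells := (T.mem_supp.1 (T.vsq_mem_supp hk)).1

theorem lab_fsq : T.lab (T.fsq k) = k := (T.mem_supp.1 (T.fsq_mem_supp hk)).2

theorem lab_vsq : T.lab (T.vsq k) = k := (T.mem_supp.1 (T.vsq_mem_supp hk)).2

theorem labE_fsq : T.labE (T.fsq k) = k := by
  rw [T.labE_of_mem (T.fsq_mem_cells hk), T.lab_fsq hk]

theorem labE_vsq : T.labE (T.vsq k) = k := by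
  rw [T.labE_of_mem (T.vsq_mem_cells hk), T.lab_vsq hk]

theorem eq_fsq_or_eq_vsq {z : ℕ × ℕ} (hz : z ∈ T.cells) (hlz : T.lab z = k) :
    z = T.fsq k ∨ z = T.vsq k := by
  simpa [T.supp_eq_pair hk] using T.mem_supp.2 ⟨hz, hlz⟩

theorem noncore_fsq : r + 2 ≤ (T.fsq k).1 + (T.fsq k).2 :=
  T.noncore_of_lab_ne_zero (T.fsq_mem_cells hk)
    (by rw [T.lab_fsq hk]; exact Nat.one_le_iff_ne_zero.1 hk.1)

theorem noncore_vsq : r + 2 ≤ (T.vsq k).1 + (T.vsq k).2 :=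
  T.noncore_of_lab_ne_zero (T.vsq_mem_cells hk)
    (by rw [T.lab_vsq hk]; exact Nat.one_le_iff_ne_zero.1 hk.1)

theorem boxedSet_supp_iff :
    BoxedSet r (T.supp k) ↔ ((T.vsq k).1 % 2 = 1 ↔ T.vsq k ⋖ T.fsq k) := by
  rw [T.supp_eq_pair hk]
  exact boxedSet_pair_iff (T.variableSq_vsq hk) (T.pos_cells _ (T.fsq_mem_cells hk))
    (T.fsq_covBy_or_covBy_fsq hk)

omit hk in
theorem lab_mem_Icc {z : ℕ × ℕ} (hz : z ∈ T.cells) (hnc : r + 2 ≤ z.1 + z.2) :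
    T.lab z ∈ Set.Icc 1 n := by
  have := T.core_zero z hz
  exact ⟨by omega, T.lab_le z hz⟩

omit hk in
theorem vsq_lab {z : ℕ × ℕ} (hz : z ∈ T.cells) (hvar : VariableSq r z)
    (hnc : r + 2 ≤ z.1 + z.2) : T.vsq (T.lab z) = z := by
  have hk := T.lab_mem_Icc hz hnc
  rcases T.eq_fsq_or_eq_vsq hk hz rfl with h | h
  · exact absurd hvar (h ▸ T.fixedSq_fsq hk)
  · exact h.symm

end

section

/-- Garfinkle's new position of the variable square of the domino `k` under moving through.
The test `f.1 + v.2 < v.1 + f.2` says that `v` lies below or to the left of `f`. -/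
noncomputable def xsq (k : ℕ) : ℕ × ℕ :=
  let f := T.fsq k
  let v := T.vsq k
  if f.1 + v.2 < v.1 + f.2 then
    if (k : ℕ∞) < T.labE (f.1 - 1, f.2 + 1) then (f.1 - 1, f.2) else (f.1, f.2 + 1)
  else
    if (k : ℕ∞) < T.labE (f.1 + 1, f.2 - 1) then (f.1, f.2 - 1) else (f.1 + 1, f.2)

theorem eq_of_isSuppD' {k : ℕ} {s : Finset (ℕ × ℕ)} (hs : IsSuppD' T k s) :
    s = {T.fsq k, T.xsq k} := by
  obtain ⟨i, j, hfix, h⟩ := hs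
  have hvar : ∀ z : ℕ × ℕ, z.1 + z.2 + 1 = i + j ∨ z.1 + z.2 = i + j + 1 → VariableSq r z := by
    unfold FixedSq at hfix
    unfold VariableSq
    omega
  have hpos : ∀ p : Finset (ℕ × ℕ), T.supp k = p → (i, j) ∈ p → 1 ≤ i ∧ 1 ≤ j := fun p hp hij =>
    T.pos_cells _ (T.mem_supp.1 (hp ▸ hij)).1
  have hif : ∀ {d x y : ℕ × ℕ},
      (k < T.labE d ∧ s = {(i, j), x} ∨ T.labE d < k ∧ s = {(i, j), y}) →
      s = {(i, j), if (k : ℕ∞) < T.labE d then x else y} := by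
    rintro d x y (⟨hlt, rfl⟩ | ⟨hgt, rfl⟩)
    exacts [by rw [if_pos hlt], by rw [if_neg (not_lt.2 hgt.le)]]
  unfold xsq
  rcases h with ⟨hpat | hpat, hcmp⟩ | ⟨hpat | hpat, hcmp⟩
  · have hv := hvar (i + 1, j) (by simp only; omega)
    rw [T.fsq_eq_of_supp_eq hpat hfix hv, T.vsq_eq_of_supp_eq hpat hfix hv,
      if_pos (by simp only; omega)]
    exact hif hcmp
  · have := hpos _ hpat (by simp)
    rw [Finset.pair_comm] at hpat
    have hv := hvar (i, j - 1) (by simp only; omega)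
    rw [T.fsq_eq_of_supp_eq hpat hfix hv, T.vsq_eq_of_supp_eq hpat hfix hv,
      if_pos (by simp only; omega)]
    exact hif hcmp
  · have := hpos _ hpat (by simp)
    have hv := hvar (i - 1, j) (by simp only; omega)
    rw [T.fsq_eq_of_supp_eq hpat hfix hv, T.vsq_eq_of_supp_eq hpat hfix hv,
      if_neg (by simp only; omega)]
    exact hif hcmp
  · rw [Finset.pair_comm] at hpat
    have hv := hvar (i, j + 1) (by simp only; omega)
    rw [T.fsq_eq_of_supp_eq hpat hfix hv, T.vsq_eq_of_supp_eq hpat hfix hv,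
      if_neg (by simp only; omega)]
    exact hif hcmp

variable {k : ℕ} (hk : k ∈ Set.Icc 1 n)
include hk

theorem labE_ne {z : ℕ × ℕ} (hzF : z ≠ T.fsq k) (hzV : z ≠ T.vsq k) : T.labE z ≠ k := by
  intro h
  unfold labE at h
  split_ifs at h with h₀ hz
  · exact (Nat.one_le_iff_ne_zero.1 hk.1) (by exact_mod_cast h.symm)
  · rcases T.eq_fsq_or_eq_vsq hk hz (by exact_mod_cast h) with h' | h'
    exacts [hzF h', hzV h']
  · exact ENat.top_ne_natCast k h

theorem xsq_cases : ∃ i j, T.fsq k = (i, j) ∧ 1 ≤ i ∧ 1 ≤ j ∧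
    ((T.vsq k = (i + 1, j) ∨ T.vsq k = (i, j - 1)) ∧
      ((k : ℕ∞) < T.labE (i - 1, j + 1) ∧ T.xsq k = (i - 1, j) ∨
        T.labE (i - 1, j + 1) < k ∧ T.xsq k = (i, j + 1)) ∨
     (T.vsq k = (i - 1, j) ∨ T.vsq k = (i, j + 1)) ∧
      ((k : ℕ∞) < T.labE (i + 1, j - 1) ∧ T.xsq k = (i, j - 1) ∨
        T.labE (i + 1, j - 1) < k ∧ T.xsq k = (i + 1, j))) := by
  obtain ⟨⟨i, j⟩, hF⟩ : ∃ p, T.fsq k = p := ⟨_, rfl⟩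
  have hpos := T.pos_cells _ (T.fsq_mem_cells hk)
  have hadj := T.fsq_covBy_or_covBy_fsq hk
  rw [hF] at hpos hadj
  refine ⟨i, j, hF, hpos.1, hpos.2, ?_⟩
  have hif : ∀ {d : ℕ × ℕ} (x y : ℕ × ℕ), d ≠ (i, j) → d ≠ T.vsq k →
      (k : ℕ∞) < T.labE d ∧ (if (k : ℕ∞) < T.labE d then x else y) = x ∨
        T.labE d < k ∧ (if (k : ℕ∞) < T.labE d then x else y) = y := fun x y h₁ h₂ => by
    rcases lt_or_gt_of_ne (T.labE_ne hk (hF ▸ h₁) h₂) with h | h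
    exacts [Or.inr ⟨h, if_neg (not_lt.2 h.le)⟩, Or.inl ⟨h, if_pos h⟩]
  unfold xsq
  rw [hF]
  simp only [natProd_covBy_iff] at hadj
  rcases hadj with (hV | hV) | (hV | hV)
  · rw [hV, if_pos (by simp only; omega)]
    exact Or.inl ⟨Or.inl rfl, hif _ _ (by simp only [ne_eq, Prod.mk.injEq]; omega)
      (by rw [hV]; simp only [ne_eq, Prod.mk.injEq]; omega)⟩
  · rw [hV, if_neg (by simp only; omega)]
    exact Or.inr ⟨Or.inr rfl, hif _ _ (by simp only [ne_eq, Prod.mk.injEq]; omega)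
      (by rw [hV]; simp only [ne_eq, Prod.mk.injEq]; omega)⟩
  · replace hV : T.vsq k = (i - 1, j) := by
      rw [Prod.ext_iff] at hV ⊢
      simp only at hV ⊢
      omega
    rw [hV, if_neg (by simp only; omega)]
    exact Or.inr ⟨Or.inl rfl, hif _ _ (by simp only [ne_eq, Prod.mk.injEq]; omega)
      (by rw [hV]; simp only [ne_eq, Prod.mk.injEq]; omega)⟩
  · replace hV : T.vsq k = (i, j - 1) := by
      rw [Prod.ext_iff] at hV ⊢
      simp only at hV ⊢
      omega
    rw [hV, if_pos (by simp only; omega)]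
    exact Or.inl ⟨Or.inr rfl, hif _ _ (by simp only [ne_eq, Prod.mk.injEq]; omega)
      (by rw [hV]; simp only [ne_eq, Prod.mk.injEq]; omega)⟩

theorem isSuppD'_xsq : IsSuppD' T k {T.fsq k, T.xsq k} := by
  have hsupp := T.supp_eq_pair hk
  have hfix := T.fixedSq_fsq hk
  obtain ⟨i, j, hF, hi, hj, h⟩ := T.xsq_cases hk
  rw [hF] at hsupp hfix ⊢
  refine ⟨i, j, hfix, ?_⟩
  rcases h with ⟨hV | hV, hX | hX⟩ | ⟨hV | hV, hX | hX⟩ <;> rw [hV] at hsupp <;> rw [hX.2]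
  · exact Or.inl ⟨Or.inl hsupp, Or.inl ⟨hX.1, rfl⟩⟩
  · exact Or.inl ⟨Or.inl hsupp, Or.inr ⟨hX.1, rfl⟩⟩
  · exact Or.inl ⟨Or.inr (hsupp.trans (Finset.pair_comm _ _)), Or.inl ⟨hX.1, rfl⟩⟩
  · exact Or.inl ⟨Or.inr (hsupp.trans (Finset.pair_comm _ _)), Or.inr ⟨hX.1, rfl⟩⟩
  · exact Or.inr ⟨Or.inl hsupp, Or.inl ⟨hX.1, rfl⟩⟩
  · exact Or.inr ⟨Or.inl hsupp, Or.inr ⟨hX.1, rfl⟩⟩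
  · exact Or.inr ⟨Or.inr (hsupp.trans (Finset.pair_comm _ _)), Or.inl ⟨hX.1, rfl⟩⟩
  · exact Or.inr ⟨Or.inr (hsupp.trans (Finset.pair_comm _ _)), Or.inr ⟨hX.1, rfl⟩⟩

theorem suppD'_eq : suppD' T k = {T.fsq k, T.xsq k} := by
  have h : ∃ s, IsSuppD' T k s := ⟨_, T.isSuppD'_xsq hk⟩
  rw [suppD', dif_pos h]
  exact T.eq_of_isSuppD' h.choose_spec

theorem fsq_covBy_xsq_or_xsq_covBy_fsq : T.fsq k ⋖ T.xsq k ∨ T.xsq k ⋖ T.fsq k := by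
  obtain ⟨i, j, hF, hi, hj, h⟩ := T.xsq_cases hk
  rw [hF, natProd_covBy_iff, natProd_covBy_iff]
  rcases h with ⟨-, ⟨-, hX⟩ | ⟨-, hX⟩⟩ | ⟨-, ⟨-, hX⟩ | ⟨-, hX⟩⟩ <;> rw [hX] <;>
    simp only [Prod.mk.injEq, and_true, true_and, or_true, true_or] <;> omega

theorem xsq_ne_vsq : T.xsq k ≠ T.vsq k := by
  obtain ⟨i, j, hF, hi, hj, h⟩ := T.xsq_cases hk
  rcases h with ⟨hV | hV, ⟨-, hX⟩ | ⟨-, hX⟩⟩ | ⟨hV | hV, ⟨-, hX⟩ | ⟨-, hX⟩⟩ <;> rw [hX, hV] <;>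
    simp only [ne_eq, Prod.mk.injEq] <;> omega

theorem boxedSet_supp_iff_xsq :
    BoxedSet r (T.supp k) ↔ ((T.xsq k).1 % 2 = 1 ↔ T.fsq k ⋖ T.xsq k) := by
  rw [T.boxedSet_supp_iff hk]
  obtain ⟨i, j, hF, hi, hj, h⟩ := T.xsq_cases hk
  rcases h with ⟨hV | hV, ⟨-, hX⟩ | ⟨-, hX⟩⟩ | ⟨hV | hV, ⟨-, hX⟩ | ⟨-, hX⟩⟩ <;> rw [hF, hV, hX] <;>
    simp only [natProd_covBy_iff, Prod.mk.injEq, and_true, true_and, or_true, true_or,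
      iff_true] <;> omega

theorem labE_lt_of_covBy_xsq (hFX : T.fsq k ⋖ T.xsq k) {b : ℕ × ℕ} (hb : b ⋖ T.xsq k)
    (hbF : b ≠ T.fsq k) : T.labE b < k := by
  obtain ⟨i, j, hF, hi, hj, h⟩ := T.xsq_cases hk
  rw [hF] at hFX hbF
  obtain ⟨b₁, b₂⟩ := b
  rcases h with ⟨-, ⟨-, hX⟩ | ⟨hlt, hX⟩⟩ | ⟨-, ⟨-, hX⟩ | ⟨hlt, hX⟩⟩ <;> rw [hX] at hFX hb <;>
    simp only [natProd_covBy_iff, Prod.mk.injEq, ne_eq] at hFX hb hbF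
  · omega
  · obtain ⟨rfl, rfl⟩ : b₁ = i - 1 ∧ b₂ = j + 1 := by omega
    exact hlt
  · omega
  · obtain ⟨rfl, rfl⟩ : b₁ = i + 1 ∧ b₂ = j - 1 := by omega
    exact hlt

theorem lt_labE_of_xsq_covBy (hXF : T.xsq k ⋖ T.fsq k) {a : ℕ × ℕ} (ha : T.xsq k ⋖ a)
    (haF : a ≠ T.fsq k) : k < T.labE a := by
  obtain ⟨i, j, hF, hi, hj, h⟩ := T.xsq_cases hk
  rw [hF] at hXF haF
  obtain ⟨a₁, a₂⟩ := a
  rcases h with ⟨-, ⟨hlt, hX⟩ | ⟨-, hX⟩⟩ | ⟨-, ⟨hlt, hX⟩ | ⟨-, hX⟩⟩ <;> rw [hX] at hXF ha <;>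
    simp only [natProd_covBy_iff, Prod.mk.injEq, ne_eq] at hXF ha haF
  · obtain ⟨rfl, rfl⟩ : a₁ = i - 1 ∧ a₂ = j + 1 := by omega
    exact hlt
  · omega
  · obtain ⟨rfl, rfl⟩ : a₁ = i + 1 ∧ a₂ = j - 1 := by omega
    exact hlt
  · omega

theorem xsq_pos : 1 ≤ (T.xsq k).1 ∧ 1 ≤ (T.xsq k).2 := by
  obtain ⟨i, j, hF, hi, hj, h⟩ := T.xsq_cases hk
  rcases h with ⟨-, ⟨hlt, hX⟩ | ⟨-, hX⟩⟩ | ⟨-, ⟨hlt, hX⟩ | ⟨-, hX⟩⟩ <;> rw [hX] <;> simp only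
  · have : i - 1 ≠ 0 := fun h0 => by
      rw [T.labE_of_eq_zero (z := (i - 1, j + 1)) (Or.inl h0)] at hlt
      exact not_lt_zero hlt
    omega
  · omega
  · have : j - 1 ≠ 0 := fun h0 => by
      rw [T.labE_of_eq_zero (z := (i + 1, j - 1)) (Or.inr h0)] at hlt
      exact not_lt_zero hlt
    omega
  · omega

theorem variableSq_xsq : VariableSq r (T.xsq k) := by
  rcases T.fsq_covBy_xsq_or_xsq_covBy_fsq hk with h | h
  · exact h.fixedSq_iff.1 (T.fixedSq_fsq hk)
  · exact h.variableSq_iff.2 (T.fixedSq_fsq hk)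

theorem noncore_xsq : r + 2 ≤ (T.xsq k).1 + (T.xsq k).2 := by
  have hF := T.noncore_fsq hk
  have hfix := T.fixedSq_fsq hk
  have hvar := T.variableSq_xsq hk
  unfold FixedSq at hfix
  unfold VariableSq at hvar
  rcases T.fsq_covBy_xsq_or_xsq_covBy_fsq hk with h | h <;> have := h.fst_add_snd_eq <;> omega

theorem labE_le_of_covBy_xsq {b : ℕ × ℕ} (hb : b ⋖ T.xsq k) : T.labE b ≤ k := by
  by_cases hbF : b = T.fsq k
  · rw [hbF, T.labE_fsq hk]
  rcases T.fsq_covBy_xsq_or_xsq_covBy_fsq hk with h | h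
  · exact (T.labE_lt_of_covBy_xsq hk h hb hbF).le
  · exact T.labE_fsq hk ▸ T.labE_monotone (hb.le.trans h.le)

theorem le_labE_of_xsq_covBy {a : ℕ × ℕ} (ha : T.xsq k ⋖ a) : k ≤ T.labE a := by
  by_cases haF : a = T.fsq k
  · rw [haF, T.labE_fsq hk]
  rcases T.fsq_covBy_xsq_or_xsq_covBy_fsq hk with h | h
  · exact T.labE_fsq hk ▸ T.labE_monotone (h.le.trans ha.le)
  · exact (T.lt_labE_of_xsq_covBy hk h ha haF).le

theorem xsq_mem_cells_of_xsq_covBy (h : T.xsq k ⋖ T.fsq k) : T.xsq k ∈ T.cells := by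
  have := T.xsq_pos hk
  exact T.mem_cells_of_covBy h (T.fsq_mem_cells hk) (by omega) (by omega)

end

section

variable {k l : ℕ}

section

variable (hk : k ∈ Set.Icc 1 n) (hl : l ∈ Set.Icc 1 n)
include hk hl

theorem fsq_ne_fsq (hkl : k ≠ l) : T.fsq k ≠ T.fsq l := fun h =>
  hkl (by rw [← T.lab_fsq hk, h, T.lab_fsq hl])

theorem fsq_covBy_xsq_iff_of_xsq_eq_vsq (hkl : k ≠ l) (h : T.xsq k = T.vsq l) :
    T.fsq k ⋖ T.xsq k ↔ T.xsq k ⋖ T.fsq l := by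
  have hFF := T.fsq_ne_fsq hk hl hkl
  have hx : T.labE (T.xsq k) = l := by rw [h, T.labE_vsq hl]
  rcases T.fsq_covBy_or_covBy_fsq hl with hl' | hl' <;> rw [← h] at hl'
  · refine ⟨fun hk' => ?_, fun h' => absurd hl'.lt h'.lt.asymm⟩
    have h₁ := T.labE_lt_of_covBy_xsq hk hk' hl' hFF.symm
    have h₂ := T.labE_monotone hk'.le
    rw [T.labE_fsq hl] at h₁
    rw [T.labE_fsq hk, hx] at h₂
    exact absurd (h₁.trans_le h₂) (lt_irrefl _)
  · refine ⟨fun _ => hl', fun _ => ?_⟩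
    refine (T.fsq_covBy_xsq_or_xsq_covBy_fsq hk).resolve_right fun hk' => ?_
    have h₁ := T.lt_labE_of_xsq_covBy hk hk' hl' hFF.symm
    have h₂ := T.labE_monotone hk'.le
    rw [T.labE_fsq hl] at h₁
    rw [T.labE_fsq hk, hx] at h₂
    exact absurd (h₁.trans_le h₂) (lt_irrefl _)

theorem fsq_covBy_xsq_iff_of_xsq_eq_xsq (h : T.xsq k = T.xsq l) (hx : T.xsq k ∈ T.cells) :
    T.fsq k ⋖ T.xsq k ↔ T.fsq l ⋖ T.xsq l := by
  have hμV := T.vsq_lab hx (T.variableSq_xsq hk) (T.noncore_xsq hk)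
  have hμ := T.lab_mem_Icc hx (T.noncore_xsq hk)
  generalize T.lab (T.xsq k) = μ at hμV hμ
  have hkμ : k ≠ μ := by
    rintro rfl
    exact T.xsq_ne_vsq hk hμV.symm
  have hlμ : l ≠ μ := by
    rintro rfl
    exact T.xsq_ne_vsq hl (h ▸ hμV.symm)
  rw [T.fsq_covBy_xsq_iff_of_xsq_eq_vsq hk hμ hkμ hμV.symm,
    T.fsq_covBy_xsq_iff_of_xsq_eq_vsq hl hμ hlμ (h ▸ hμV.symm), h]

theorem eq_of_xsq_eq (h : T.xsq k = T.xsq l) : k = l := by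
  by_contra hkl
  have hFF := T.fsq_ne_fsq hk hl hkl
  have hside : T.fsq k ⋖ T.xsq k ↔ T.fsq l ⋖ T.xsq l := by
    by_cases hx : T.xsq k ∈ T.cells
    · exact T.fsq_covBy_xsq_iff_of_xsq_eq_xsq hk hl h hx
    · refine iff_of_true ?_ ?_
      · exact (T.fsq_covBy_xsq_or_xsq_covBy_fsq hk).resolve_right fun h' =>
          hx (T.xsq_mem_cells_of_xsq_covBy hk h')
      · exact (T.fsq_covBy_xsq_or_xsq_covBy_fsq hl).resolve_right fun h' =>
          hx (h ▸ T.xsq_mem_cells_of_xsq_covBy hl h')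
  rcases T.fsq_covBy_xsq_or_xsq_covBy_fsq hk with hk' | hk'
  · have hl' := hside.1 hk'
    have h₁ := T.labE_lt_of_covBy_xsq hk hk' (h ▸ hl') hFF.symm
    have h₂ := T.labE_lt_of_covBy_xsq hl hl' (h ▸ hk') hFF
    rw [T.labE_fsq hl] at h₁
    rw [T.labE_fsq hk] at h₂
    exact lt_asymm h₁ h₂
  · have hl' := (T.fsq_covBy_xsq_or_xsq_covBy_fsq hl).resolve_left fun h' =>
      absurd hk'.lt (hside.2 h').lt.asymm
    have h₁ := T.lt_labE_of_xsq_covBy hk hk' (h ▸ hl') hFF.symm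
    have h₂ := T.lt_labE_of_xsq_covBy hl hl' (h ▸ hk') hFF
    rw [T.labE_fsq hl] at h₁
    rw [T.labE_fsq hk] at h₂
    exact lt_asymm h₁ h₂

theorem boxedSet_supp_iff_of_xsq_eq_vsq (h : T.xsq k = T.vsq l) :
    BoxedSet r (T.supp k) ↔ BoxedSet r (T.supp l) := by
  obtain rfl | hkl := eq_or_ne k l
  · rfl
  rw [T.boxedSet_supp_iff_xsq hk, T.boxedSet_supp_iff hl, ← h,
    T.fsq_covBy_xsq_iff_of_xsq_eq_vsq hk hl hkl h]

theorem cycStep_of_xsq_eq_vsq (h : T.xsq k = T.vsq l) : cycStep T k l :=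
  Or.inl ⟨T.vsq l, Finset.mem_inter.2
    ⟨by rw [T.supp_eq_pair hl]; simp, by rw [T.suppD'_eq hk, h]; simp⟩⟩

theorem xsq_eq_vsq_of_mem {z : ℕ × ℕ} (hkl : k ≠ l) (hzl : z ∈ T.supp l)
    (hzk : z ∈ suppD' T k) : T.xsq k = T.vsq l := by
  rw [T.supp_eq_pair hl, Finset.mem_insert, Finset.mem_singleton] at hzl
  rw [T.suppD'_eq hk, Finset.mem_insert, Finset.mem_singleton] at hzk
  rcases hzl with rfl | rfl <;> rcases hzk with h | h
  · exact absurd h.symm (T.fsq_ne_fsq hk hl hkl)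
  · exact absurd h ((T.fixedSq_fsq hl).ne (T.variableSq_xsq hk))
  · exact absurd h.symm ((T.fixedSq_fsq hk).ne (T.variableSq_vsq hl))
  · exact h.symm

theorem xsq_eq_vsq_of_cycStep (hkl : k ≠ l) (h : cycStep T k l) :
    T.xsq k = T.vsq l ∨ T.xsq l = T.vsq k := by
  rcases h with ⟨z, hz⟩ | ⟨z, hz⟩ <;> rw [Finset.mem_inter] at hz
  · exact Or.inl (T.xsq_eq_vsq_of_mem hk hl hkl hz.1 hz.2)
  · exact Or.inr (T.xsq_eq_vsq_of_mem hl hk hkl.symm hz.2 hz.1)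

end

theorem supp_zero_ne_pair {a b : ℕ × ℕ} (hab : a ≠ b) : T.supp 0 ≠ {a, b} := by
  intro h
  have hmem : ∀ z, z ∈ ({a, b} : Finset _) ↔ 1 ≤ z.1 ∧ 1 ≤ z.2 ∧ z.1 + z.2 < r + 2 :=
    fun z => h ▸ T.mem_supp_zero
  have ha := (hmem a).1 (by simp)
  have hb := (hmem b).1 (by simp)
  have hr : 2 ≤ r := by
    by_contra hr
    exact hab (Prod.ext (by omega) (by omega))
  have hsub : ({(1, 1), (1, 2), (2, 1)} : Finset (ℕ × ℕ)) ⊆ {a, b} := by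
    intro z hz
    simp only [Finset.mem_insert, Finset.mem_singleton] at hz
    rcases hz with rfl | rfl | rfl <;> exact (hmem _).2 (by simp only; omega)
  have := Finset.card_le_card hsub
  rw [Finset.card_pair hab] at this
  simp at this

theorem suppD'_eq_empty (hl : l ∉ Set.Icc 1 n) : suppD' T l = ∅ := by
  rw [suppD', dif_neg]
  rintro ⟨s, i, j, -, h⟩
  have hij : (i, j) ∈ T.supp l := by
    rcases h with ⟨hp | hp, -⟩ | ⟨hp | hp, -⟩ <;> simp [hp]
  have hpos := T.pos_cells _ (T.mem_supp.1 hij).1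
  obtain ⟨b, hb, hsupp⟩ : ∃ b, b ≠ (i, j) ∧ T.supp l = {(i, j), b} := by
    simp only at hpos
    rcases h with ⟨hp | hp, -⟩ | ⟨hp | hp, -⟩
    · exact ⟨_, by simp only [ne_eq, Prod.mk.injEq]; omega, hp⟩
    · exact ⟨_, by simp only [ne_eq, Prod.mk.injEq]; omega, hp.trans (Finset.pair_comm _ _)⟩
    · exact ⟨_, by simp only [ne_eq, Prod.mk.injEq]; omega, hp⟩
    · exact ⟨_, by simp only [ne_eq, Prod.mk.injEq]; omega, hp.trans (Finset.pair_comm _ _)⟩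
  rcases Nat.eq_zero_or_pos l with rfl | hl0
  · exact T.supp_zero_ne_pair hb.symm hsupp
  · have := T.mem_supp.1 hij
    exact hl ⟨hl0, this.2 ▸ T.lab_le _ this.1⟩

theorem mem_Icc_of_cycStep (hk : k ∈ Set.Icc 1 n) (h : cycStep T k l) : l ∈ Set.Icc 1 n := by
  by_contra hl
  rcases h with ⟨z, hz⟩ | ⟨z, hz⟩
  · rw [Finset.mem_inter, T.suppD'_eq hk, T.mem_supp, Finset.mem_insert,
      Finset.mem_singleton] at hz
    obtain ⟨⟨hzT, rfl⟩, hz⟩ := hz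
    have hcore : z.1 + z.2 < r + 2 := by
      by_contra hnc
      exact hl (T.lab_mem_Icc hzT (by omega))
    rcases hz with rfl | rfl
    · exact absurd (T.noncore_fsq hk) (by omega)
    · exact absurd (T.noncore_xsq hk) (by omega)
  · rw [T.suppD'_eq_empty hl] at hz
    simp at hz

theorem mem_Icc_of_reflTransGen (hk : k ∈ Set.Icc 1 n)
    (h : Relation.ReflTransGen (cycStep T) k l) : l ∈ Set.Icc 1 n := by
  induction h with
  | refl => exact hk
  | tail _ hstep ih => exact T.mem_Icc_of_cycStep ih hstep

theorem boxedSet_supp_iff_of_reflTransGen (hk : k ∈ Set.Icc 1 n)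
    (h : Relation.ReflTransGen (cycStep T) k l) :
    BoxedSet r (T.supp k) ↔ BoxedSet r (T.supp l) := by
  induction h with
  | refl => rfl
  | @tail b c hkb hbc ih =>
    rw [ih]
    have hb := T.mem_Icc_of_reflTransGen hk hkb
    have hc := T.mem_Icc_of_cycStep hb hbc
    obtain rfl | hne := eq_or_ne b c
    · rfl
    rcases T.xsq_eq_vsq_of_cycStep hb hc hne hbc with h | h
    · exact T.boxedSet_supp_iff_of_xsq_eq_vsq hb hc h
    · exact (T.boxedSet_supp_iff_of_xsq_eq_vsq hc hb h).symm

end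

theorem cells_eq_biUnion_supp : T.cells = (Finset.range (n + 1)).biUnion T.supp := by
  ext z
  simp only [Finset.mem_biUnion, Finset.mem_range, mem_supp]
  exact ⟨fun hz => ⟨T.lab z, Nat.lt_succ_of_le (T.lab_le z hz), hz, rfl⟩,
    fun ⟨_, _, hz, _⟩ => hz⟩

theorem card_cells_eq (T' : SDT r n) : T.cells.card = T'.cells.card := by
  have hdisj : ∀ T : SDT r n, (↑(Finset.range (n + 1)) : Set ℕ).PairwiseDisjoint T.supp :=
    fun T a _ b _ hab => Finset.disjoint_filter.2 fun _ _ ha hb => hab (ha.symm.trans hb)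
  rw [T.cells_eq_biUnion_supp, T'.cells_eq_biUnion_supp, Finset.card_biUnion (hdisj T),
    Finset.card_biUnion (hdisj T')]
  refine Finset.sum_congr rfl fun m hm => ?_
  rcases Nat.eq_zero_or_pos m with rfl | hm₀
  · congr 1
    ext z
    rw [T.mem_supp_zero, T'.mem_supp_zero]
  · have hm' : m ∈ Set.Icc 1 n := ⟨hm₀, Nat.lt_succ_iff.1 (Finset.mem_range.1 hm)⟩
    rw [T.supp_eq_pair hm', T'.supp_eq_pair hm', Finset.card_pair (T.fsq_ne_vsq hm'),
      Finset.card_pair (T'.fsq_ne_vsq hm')]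

theorem exists_mem_sdiff_forall_not_covBy (T' : SDT r n) (h : T'.cells ≠ T.cells) :
    ∃ s ∈ T.cells, s ∉ T'.cells ∧ ∀ z ∈ T.cells, ¬s ⋖ z := by
  have hne : (T.cells \ T'.cells).Nonempty := by
    rw [Finset.sdiff_nonempty]
    exact fun hsub => h (Finset.eq_of_subset_of_card_le hsub (T.card_cells_eq T').ge).symm
  obtain ⟨s, hs, hmax⟩ := Finset.exists_max_image _ (fun z : ℕ × ℕ => z.1 + z.2) hne
  rw [Finset.mem_sdiff] at hs
  refine ⟨s, hs.1, hs.2, fun z hz hsz => ?_⟩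
  have hpos := T.pos_cells s hs.1
  have hzT' : z ∉ T'.cells := fun hz' =>
    hs.2 (T'.mem_cells_of_covBy hsz hz' (by omega) (by omega))
  have := hmax z (Finset.mem_sdiff.2 ⟨hz, hzT'⟩)
  have := hsz.fst_add_snd_eq
  omega

section Outer

variable {z : ℕ × ℕ} (hz : z ∈ T.cells) (hvar : VariableSq r z) (hout : ∀ w ∈ T.cells, ¬z ⋖ w)
include hz hvar hout

theorem noncore_of_forall_not_covBy : r + 2 ≤ z.1 + z.2 := by
  have hpos := T.pos_cells z hz
  by_contra hcore
  unfold VariableSq at hvar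
  exact hout _ (T.core_mem z.1 (z.2 + 1) hpos.1 (by omega) (by omega))
    (natProd_covBy_iff.2 (Or.inr rfl))

theorem lab_mem_Icc_of_forall_not_covBy : T.lab z ∈ Set.Icc 1 n :=
  T.lab_mem_Icc hz (T.noncore_of_forall_not_covBy hz hvar hout)

theorem vsq_lab_of_forall_not_covBy : T.vsq (T.lab z) = z :=
  T.vsq_lab hz hvar (T.noncore_of_forall_not_covBy hz hvar hout)

theorem fsq_covBy_of_forall_not_covBy : T.fsq (T.lab z) ⋖ z := by
  have hk := T.lab_mem_Icc_of_forall_not_covBy hz hvar hout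
  have hV := T.vsq_lab_of_forall_not_covBy hz hvar hout
  rcases T.fsq_covBy_or_covBy_fsq hk with h | h <;> rw [hV] at h
  · exact h
  · exact absurd h (hout _ (T.fsq_mem_cells hk))

theorem not_boxedSet_supp_lab_iff : ¬BoxedSet r (T.supp (T.lab z)) ↔ z.1 % 2 = 1 := by
  have hk := T.lab_mem_Icc_of_forall_not_covBy hz hvar hout
  have hV := T.vsq_lab_of_forall_not_covBy hz hvar hout
  have hFz := T.fsq_covBy_of_forall_not_covBy hz hvar hout
  have hzF : ¬z ⋖ T.fsq (T.lab z) := fun h => h.lt.asymm hFz.lt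
  rw [T.boxedSet_supp_iff hk, hV, iff_false_intro hzF, iff_false, not_not]

theorem xsq_ne_of_forall_not_covBy {l : ℕ} (hl : l ∈ Set.Icc 1 n) : T.xsq l ≠ z := by
  intro hX
  have hk := T.lab_mem_Icc_of_forall_not_covBy hz hvar hout
  have hV := T.vsq_lab_of_forall_not_covBy hz hvar hout
  have hFz := T.fsq_covBy_of_forall_not_covBy hz hvar hout
  have hlk : l ≠ T.lab z := by
    rintro rfl
    exact T.xsq_ne_vsq hl (hX.trans hV.symm)
  have hside := T.fsq_covBy_xsq_iff_of_xsq_eq_vsq hl hk hlk (hX.trans hV.symm)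
  have hzF : ¬z ⋖ T.fsq (T.lab z) := fun h => h.lt.asymm hFz.lt
  rw [hX, iff_false_intro hzF] at hside
  rcases T.fsq_covBy_xsq_or_xsq_covBy_fsq hl with h | h
  · exact hside.1 (hX ▸ h)
  · exact hout _ (T.fsq_mem_cells hl) (hX ▸ h)

end Outer

theorem isTabCorner_of_forall_not_covBy {z f : ℕ × ℕ} (hz : z ∈ T.cells) (hvar : VariableSq r z)
    (hodd : z.1 % 2 = 1) (hout : ∀ w ∈ T.cells, ¬z ⋖ w) (hfz : f ⋖ z) (hf : f ∈ T.cells) :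
    IsTabCorner T z.1 z.2 := by
  obtain ⟨z₁, z₂⟩ := z
  obtain ⟨f₁, f₂⟩ := f
  have hpos := T.pos_cells _ hz
  simp only at hpos
  have hup : 2 ≤ z₁ → (z₁ - 1, z₂) ∈ T.cells := fun h => T.mem_cells_of_covBy
    (natProd_covBy_iff.2 (Or.inl (by ext <;> dsimp only; omega))) hz
    (by dsimp only; omega) (by dsimp only; omega)
  have hleft : 2 ≤ z₂ → (z₁, z₂ - 1) ∈ T.cells := fun h => T.mem_cells_of_covBy
    (natProd_covBy_iff.2 (Or.inr (by ext <;> dsimp only; omega))) hz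
    (by dsimp only; omega) (by dsimp only; omega)
  refine ⟨hpos.1, hpos.2, ⟨hvar, hodd⟩, fun h => hout _ h (natProd_covBy_iff.2 (Or.inr rfl)),
    fun h => hout _ h (natProd_covBy_iff.2 (Or.inl rfl)), ?_⟩
  have hfpos := T.pos_cells _ hf
  simp only at hfpos
  rcases natProd_covBy_iff.1 hfz with h | h <;> simp only [Prod.mk.injEq] at h
  · rcases Nat.lt_or_ge z₂ 2 with h | h
    · exact Or.inr (Or.inl ⟨hup (by omega), by omega⟩)
    · exact Or.inl ⟨hup (by omega), hleft h⟩
  · rcases Nat.lt_or_ge z₁ 2 with h | h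
    · exact Or.inr (Or.inr ⟨hleft (by omega), by omega⟩)
    · exact Or.inl ⟨hup h, hleft (by omega)⟩

theorem exists_isTabCorner_of_not_boxedSet {c : Set ℕ} (hc : NonCoreOpen T c) {l : ℕ}
    (hl : l ∈ c) (hnb : ¬BoxedSet r (T.supp l)) :
    ∃ i j, IsTabCorner T i j ∧ (i, j) ∈ T.cells := by
  obtain ⟨⟨k, hk₁, hk₂, rfl⟩, T', ⟨hin, hout⟩, hne⟩ := hc
  obtain ⟨s, hsT, hsT', hmax⟩ := T.exists_mem_sdiff_forall_not_covBy T' hne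
  have hpos := T.pos_cells s hsT
  have hnc : r + 2 ≤ s.1 + s.2 := by
    by_contra h
    exact hsT' (T'.core_mem s.1 s.2 hpos.1 hpos.2 (by omega))
  have hm := T.lab_mem_Icc hsT hnc
  have hmc : T.lab s ∈ cyc T k := by
    by_contra hmc
    have hs : s ∈ T'.supp (T.lab s) := (hout _ hm.1 hm.2 hmc).symm ▸ T.mem_supp.2 ⟨hsT, rfl⟩
    exact hsT' (T'.mem_supp.1 hs).1
  have hsV : T.vsq (T.lab s) = s := by
    refine ((T.eq_fsq_or_eq_vsq hm hsT rfl).resolve_left fun hsF => hsT' ?_).symm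
    have hF : T.fsq (T.lab s) ∈ T'.supp (T.lab s) := by
      rw [hin _ hmc, T.suppD'_eq hm]
      exact Finset.mem_insert_self _ _
    exact hsF ▸ (T'.mem_supp.1 hF).1
  have hvar : VariableSq r s := hsV ▸ T.variableSq_vsq hm
  have hodd : s.1 % 2 = 1 := by
    rw [← T.not_boxedSet_supp_lab_iff hsT hvar hmax,
      ← T.boxedSet_supp_iff_of_reflTransGen ⟨hk₁, hk₂⟩ hmc.2.2,
      T.boxedSet_supp_iff_of_reflTransGen ⟨hk₁, hk₂⟩ hl.2.2]
    exact hnb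
  exact ⟨s.1, s.2, T.isTabCorner_of_forall_not_covBy hsT hvar hodd hmax
    (T.fsq_covBy_of_forall_not_covBy hsT hvar hmax) (T.fsq_mem_cells hm), hsT⟩

theorem exists_xsq_eq_vsq_of_mem_cyc {k : ℕ} (hk : k ∈ Set.Icc 1 n)
    (hno : ∀ l ∈ Set.Icc 1 n, T.xsq l ≠ T.vsq k) {m : ℕ} (hm : m ∈ cyc T k) (hmk : m ≠ k) :
    ∃ l ∈ cyc T k, T.xsq l = T.vsq m := by
  let E : ℕ → ℕ → Prop := fun a b =>
    a ∈ Set.Icc 1 n ∧ b ∈ Set.Icc 1 n ∧ T.xsq a = T.vsq b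
  -- Against the direction of `E`, a step `X c = V b` would give `b ≠ k` a second parent
  -- besides the last step of its `E`-path, contradicting the injectivity of `xsq`.
  have hE : ∀ m, Relation.ReflTransGen (cycStep T) k m → Relation.ReflTransGen E k m := by
    intro m h
    induction h with
    | refl => exact .refl
    | @tail b c hkb hbc ih =>
      have hb := T.mem_Icc_of_reflTransGen hk hkb
      have hc := T.mem_Icc_of_cycStep hb hbc
      obtain rfl | hne := eq_or_ne b c
      · exact ih
      rcases T.xsq_eq_vsq_of_cycStep hb hc hne hbc with h | h
      · exact ih.tail ⟨hb, hc, h⟩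
      · rcases ih.cases_tail with rfl | ⟨w, hkw, hw, -, hwb⟩
        · exact absurd h (hno c hc)
        · rwa [T.eq_of_xsq_eq hw hc (hwb.trans h.symm)] at hkw
  rcases (hE m hm.2.2).cases_tail with rfl | ⟨l, hkl, hl, -, hlm⟩
  · exact absurd rfl hmk
  · refine ⟨l, ⟨hl.1, hl.2, ?_⟩, hlm⟩
    exact Relation.ReflTransGen.mono (fun a b h => T.cycStep_of_xsq_eq_vsq h.1 h.2.1 h.2.2) _ _ hkl

section

variable (k : ℕ)

open Classical in
noncomputable def movedCells : Finset (ℕ × ℕ) :=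
  T.cells.filter (· ∉ T.vsq '' cyc T k) ∪
    ((Finset.Icc 1 n).filter (· ∈ cyc T k)).image T.xsq

open Classical in
noncomputable def movedLab (z : ℕ × ℕ) : ℕ :=
  if h : ∃ m ∈ cyc T k, T.xsq m = z then h.choose
  else if z ∈ T.vsq '' cyc T k then 0 else T.lab z

variable {T k}

theorem mem_Icc_of_mem_cyc {m : ℕ} (hm : m ∈ cyc T k) : m ∈ Set.Icc 1 n := ⟨hm.1, hm.2.1⟩

theorem mem_movedCells {z : ℕ × ℕ} : z ∈ T.movedCells k ↔
    (z ∈ T.cells ∧ z ∉ T.vsq '' cyc T k) ∨ z ∈ T.xsq '' cyc T k := by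
  simp only [movedCells, Finset.mem_union, Finset.mem_filter, Finset.mem_image, Finset.mem_Icc,
    Set.mem_image]
  exact or_congr Iff.rfl ⟨fun ⟨m, ⟨_, hm⟩, h⟩ => ⟨m, hm, h⟩,
    fun ⟨m, hm, h⟩ => ⟨m, ⟨⟨hm.1, hm.2.1⟩, hm⟩, h⟩⟩

theorem movedLab_xsq {m : ℕ} (hm : m ∈ cyc T k) : T.movedLab k (T.xsq m) = m := by
  have h : ∃ m' ∈ cyc T k, T.xsq m' = T.xsq m := ⟨m, hm, rfl⟩
  rw [movedLab, dif_pos h]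
  exact T.eq_of_xsq_eq (mem_Icc_of_mem_cyc h.choose_spec.1) (mem_Icc_of_mem_cyc hm) h.choose_spec.2

theorem movedLab_of_not_mem {z : ℕ × ℕ} (hX : z ∉ T.xsq '' cyc T k)
    (hV : z ∉ T.vsq '' cyc T k) : T.movedLab k z = T.lab z := by
  rw [movedLab, dif_neg (show ¬∃ m ∈ cyc T k, T.xsq m = z from hX), if_neg hV]

theorem variableSq_of_mem_image_xsq {z : ℕ × ℕ} (hz : z ∈ T.xsq '' cyc T k) :
    VariableSq r z := by
  obtain ⟨m, hm, rfl⟩ := hz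
  exact T.variableSq_xsq (mem_Icc_of_mem_cyc hm)

theorem variableSq_of_mem_image_vsq {z : ℕ × ℕ} (hz : z ∈ T.vsq '' cyc T k) :
    VariableSq r z := by
  obtain ⟨m, hm, rfl⟩ := hz
  exact T.variableSq_vsq (mem_Icc_of_mem_cyc hm)

theorem fsq_mem_movedCells {m : ℕ} (hm : m ∈ Set.Icc 1 n) :
    T.fsq m ∈ T.movedCells k ∧ T.movedLab k (T.fsq m) = m := by
  have hV : T.fsq m ∉ T.vsq '' cyc T k := fun h =>
    T.fixedSq_fsq hm (variableSq_of_mem_image_vsq h)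
  have hX : T.fsq m ∉ T.xsq '' cyc T k := fun h =>
    T.fixedSq_fsq hm (variableSq_of_mem_image_xsq h)
  exact ⟨mem_movedCells.2 (Or.inl ⟨T.fsq_mem_cells hm, hV⟩),
    (movedLab_of_not_mem hX hV).trans (T.lab_fsq hm)⟩

theorem filter_movedLab_of_mem {m : ℕ} (hm : m ∈ cyc T k) :
    (T.movedCells k).filter (T.movedLab k · = m) = {T.fsq m, T.xsq m} := by
  have hm' := mem_Icc_of_mem_cyc hm
  ext z
  rw [Finset.mem_filter, Finset.mem_insert, Finset.mem_singleton]
  constructor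
  · rintro ⟨hz, hlz⟩
    by_cases hX : z ∈ T.xsq '' cyc T k
    · obtain ⟨m', hm'', rfl⟩ := hX
      rw [movedLab_xsq hm''] at hlz
      exact Or.inr (hlz ▸ rfl)
    · obtain ⟨hzT, hV⟩ := (mem_movedCells.1 hz).resolve_right hX
      rw [movedLab_of_not_mem hX hV] at hlz
      refine (T.eq_fsq_or_eq_vsq hm' hzT hlz).imp_right fun h => ?_
      exact absurd ⟨m, hm, h.symm⟩ hV
  · rintro (rfl | rfl)
    · exact fsq_mem_movedCells hm'
    · exact ⟨mem_movedCells.2 (Or.inr ⟨m, hm, rfl⟩), movedLab_xsq hm⟩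

theorem filter_movedLab_of_not_mem {m : ℕ} (hm : m ∈ Set.Icc 1 n) (hmc : m ∉ cyc T k) :
    (T.movedCells k).filter (T.movedLab k · = m) = {T.fsq m, T.vsq m} := by
  ext z
  rw [Finset.mem_filter, Finset.mem_insert, Finset.mem_singleton]
  constructor
  · rintro ⟨hz, hlz⟩
    by_cases hX : z ∈ T.xsq '' cyc T k
    · obtain ⟨m', hm', rfl⟩ := hX
      rw [movedLab_xsq hm'] at hlz
      exact absurd (hlz ▸ hm') hmc
    · obtain ⟨hzT, hV⟩ := (mem_movedCells.1 hz).resolve_right hX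
      rw [movedLab_of_not_mem hX hV] at hlz
      exact T.eq_fsq_or_eq_vsq hm hzT hlz
  · rintro (rfl | rfl)
    · exact fsq_mem_movedCells hm
    · have hV : T.vsq m ∉ T.vsq '' cyc T k := by
        rintro ⟨m', hm', h⟩
        rw [← T.lab_vsq (mem_Icc_of_mem_cyc hm'), h, T.lab_vsq hm] at hm'
        exact hmc hm'
      have hX : T.vsq m ∉ T.xsq '' cyc T k := by
        rintro ⟨m', hm', h⟩
        exact hmc ⟨hm.1, hm.2, hm'.2.2.tail
          (T.cycStep_of_xsq_eq_vsq (mem_Icc_of_mem_cyc hm') hm h)⟩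
      exact ⟨mem_movedCells.2 (Or.inl ⟨T.vsq_mem_cells hm, hV⟩),
        (movedLab_of_not_mem hX hV).trans (T.lab_vsq hm)⟩

theorem pos_of_mem_movedCells {z : ℕ × ℕ} (hz : z ∈ T.movedCells k) : 1 ≤ z.1 ∧ 1 ≤ z.2 := by
  rcases mem_movedCells.1 hz with ⟨hzT, -⟩ | ⟨m, hm, rfl⟩
  exacts [T.pos_cells z hzT, T.xsq_pos (mem_Icc_of_mem_cyc hm)]

theorem movedLab_le_of_covBy {a b : ℕ × ℕ} (hab : a ⋖ b) (ha : a ∈ T.movedCells k)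
    (hb : b ∈ T.movedCells k) : T.movedLab k a ≤ T.movedLab k b := by
  by_cases haX : a ∈ T.xsq '' cyc T k <;> by_cases hbX : b ∈ T.xsq '' cyc T k
  · exact absurd (variableSq_of_mem_image_xsq hbX)
      (hab.variableSq_iff.1 (variableSq_of_mem_image_xsq haX))
  · obtain ⟨m, hm, rfl⟩ := haX
    obtain ⟨hbT, hbV⟩ := (mem_movedCells.1 hb).resolve_right hbX
    have := T.le_labE_of_xsq_covBy (mem_Icc_of_mem_cyc hm) hab
    rw [T.labE_of_mem hbT] at this
    rw [movedLab_xsq hm, movedLab_of_not_mem hbX hbV]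
    exact_mod_cast this
  · obtain ⟨m, hm, rfl⟩ := hbX
    obtain ⟨haT, haV⟩ := (mem_movedCells.1 ha).resolve_right haX
    have := T.labE_le_of_covBy_xsq (mem_Icc_of_mem_cyc hm) hab
    rw [T.labE_of_mem haT] at this
    rw [movedLab_xsq hm, movedLab_of_not_mem haX haV]
    exact_mod_cast this
  · obtain ⟨haT, haV⟩ := (mem_movedCells.1 ha).resolve_right haX
    obtain ⟨hbT, hbV⟩ := (mem_movedCells.1 hb).resolve_right hbX
    rw [movedLab_of_not_mem haX haV, movedLab_of_not_mem hbX hbV]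
    exact T.lab_le_of_covBy hab haT hbT

variable (hvac : ∀ m ∈ cyc T k, T.vsq m ∉ T.xsq '' cyc T k → ∀ w ∈ T.cells, ¬T.vsq m ⋖ w)
include hvac

theorem mem_movedCells_of_covBy {a b : ℕ × ℕ} (hab : a ⋖ b) (hb : b ∈ T.movedCells k)
    (ha₁ : a.1 ≠ 0) (ha₂ : a.2 ≠ 0) : a ∈ T.movedCells k := by
  rcases mem_movedCells.1 hb with ⟨hbT, -⟩ | ⟨m, hm, rfl⟩
  · have haT := T.mem_cells_of_covBy hab hbT ha₁ ha₂
    by_cases hX : a ∈ T.xsq '' cyc T k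
    · exact mem_movedCells.2 (Or.inr hX)
    refine mem_movedCells.2 (Or.inl ⟨haT, ?_⟩)
    rintro ⟨m, hm, rfl⟩
    exact hvac m hm hX b hbT hab
  · have hm' := mem_Icc_of_mem_cyc hm
    have haT : a ∈ T.cells := T.mem_cells_of_labE_ne_top ha₁ ha₂
      (ne_top_of_le_ne_top (ENat.natCast_ne_top m) (T.labE_le_of_covBy_xsq hm' hab))
    refine mem_movedCells.2 (Or.inl ⟨haT, fun h => ?_⟩)
    exact hab.fixedSq_iff.2 (T.variableSq_xsq hm') (variableSq_of_mem_image_vsq h)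

variable (T k) in
noncomputable def moveThrough : SDT r n where
  cells := T.movedCells k
  lab := T.movedLab k
  lab_outside z hz := by
    have hX : z ∉ T.xsq '' cyc T k := fun h => hz (mem_movedCells.2 (Or.inr h))
    by_cases hV : z ∈ T.vsq '' cyc T k
    · rw [movedLab, dif_neg (show ¬∃ m ∈ cyc T k, T.xsq m = z from hX), if_pos hV]
    · rw [movedLab_of_not_mem hX hV]
      exact T.lab_outside z fun hzT => hz (mem_movedCells.2 (Or.inl ⟨hzT, hV⟩))
  pos_cells _ := pos_of_mem_movedCells
  young_row i j h hj := by
    have := pos_of_mem_movedCells h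
    exact mem_movedCells_of_covBy hvac (natProd_covBy_iff.2 (Or.inr rfl)) h
      (by simp only; omega) (by simp only; omega)
  young_col i j h hi := by
    have := pos_of_mem_movedCells h
    exact mem_movedCells_of_covBy hvac (natProd_covBy_iff.2 (Or.inl rfl)) h
      (by simp only; omega) (by simp only; omega)
  core_mem i j hi hj hij := by
    refine mem_movedCells.2 (Or.inl ⟨T.core_mem i j hi hj hij, ?_⟩)
    rintro ⟨m, hm, hV⟩
    have := T.noncore_vsq (mem_Icc_of_mem_cyc hm)
    rw [hV] at this
    omega
  core_zero z hz := by
    by_cases hX : z ∈ T.xsq '' cyc T k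
    · obtain ⟨m, hm, rfl⟩ := hX
      have := T.noncore_xsq (mem_Icc_of_mem_cyc hm)
      rw [movedLab_xsq hm]
      exact iff_of_false (Nat.one_le_iff_ne_zero.1 hm.1) (by omega)
    · obtain ⟨hzT, hV⟩ := (mem_movedCells.1 hz).resolve_right hX
      rw [movedLab_of_not_mem hX hV]
      exact T.core_zero z hzT
  lab_le z hz := by
    by_cases hX : z ∈ T.xsq '' cyc T k
    · obtain ⟨m, hm, rfl⟩ := hX
      rw [movedLab_xsq hm]
      exact hm.2.1
    · obtain ⟨hzT, hV⟩ := (mem_movedCells.1 hz).resolve_right hX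
      rw [movedLab_of_not_mem hX hV]
      exact T.lab_le z hzT
  domino m hm₁ hm₂ := by
    by_cases hmc : m ∈ cyc T k
    · exact exists_domino_of_filter_eq (filter_movedLab_of_mem hmc)
        (T.fsq_covBy_xsq_or_xsq_covBy_fsq ⟨hm₁, hm₂⟩)
    · exact exists_domino_of_filter_eq (filter_movedLab_of_not_mem ⟨hm₁, hm₂⟩ hmc)
        (T.fsq_covBy_or_covBy_fsq ⟨hm₁, hm₂⟩)
  row_mono _ _ ha hb := movedLab_le_of_covBy (natProd_covBy_iff.2 (Or.inr rfl)) ha hb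
  col_mono _ _ ha hb := movedLab_le_of_covBy (natProd_covBy_iff.2 (Or.inl rfl)) ha hb

theorem isMT_moveThrough : IsMT T (T.moveThrough k hvac) (cyc T k) :=
  ⟨fun _ hm => (filter_movedLab_of_mem hm).trans (T.suppD'_eq (mem_Icc_of_mem_cyc hm)).symm,
    fun _ hm₁ hm₂ hmc => (filter_movedLab_of_not_mem ⟨hm₁, hm₂⟩ hmc).trans
      (T.supp_eq_pair ⟨hm₁, hm₂⟩).symm⟩

end

theorem not_somewhatSpecial_of_isTabCorner {p q : ℕ} (hc : IsTabCorner T p q)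
    (hfull : (p, q) ∈ T.cells) : ¬SomewhatSpecial T := by
  obtain ⟨-, -, ⟨hvar, hodd⟩, hright, hdown, -⟩ := hc
  have hout : ∀ w ∈ T.cells, ¬(p, q) ⋖ w := by
    intro w hw h
    rcases natProd_covBy_iff.1 h with rfl | rfl
    exacts [hdown hw, hright hw]
  have hk := T.lab_mem_Icc_of_forall_not_covBy hfull hvar hout
  have hV := T.vsq_lab_of_forall_not_covBy hfull hvar hout
  have hno : ∀ l ∈ Set.Icc 1 n, T.xsq l ≠ T.vsq (T.lab (p, q)) := fun l hl => by
    rw [hV]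
    exact T.xsq_ne_of_forall_not_covBy hfull hvar hout hl
  have hvac : ∀ m ∈ cyc T (T.lab (p, q)), T.vsq m ∉ T.xsq '' cyc T (T.lab (p, q)) →
      ∀ w ∈ T.cells, ¬T.vsq m ⋖ w := by
    intro m hm hmX
    obtain rfl | hmk := eq_or_ne m (T.lab (p, q))
    · rw [hV]
      exact hout
    · exact absurd (T.exists_xsq_eq_vsq_of_mem_cyc hk hno hm hmk) hmX
  have hkc : T.lab (p, q) ∈ cyc T (T.lab (p, q)) := ⟨hk.1, hk.2, .refl⟩
  have hcells : (T.moveThrough _ hvac).cells ≠ T.cells := by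
    intro h
    rcases mem_movedCells.1 (h ▸ hfull : (p, q) ∈ T.movedCells _) with ⟨-, h'⟩ | ⟨l, hl, hlz⟩
    · exact h' ⟨_, hkc, hV⟩
    · exact hno l (mem_Icc_of_mem_cyc hl) (hlz.trans hV.symm)
  intro hss
  exact (T.not_boxedSet_supp_lab_iff hfull hvar hout).2 hodd
    (hss _ ⟨⟨_, hk.1, hk.2, rfl⟩, _, isMT_moveThrough hvac, hcells⟩ _ hkc)

theorem somewhatSpecial_iff : SomewhatSpecial T ↔ ∀ i j, IsTabCorner T i j → (i, j) ∉ T.cells :=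
  ⟨fun hss _ _ hc hfull => T.not_somewhatSpecial_of_isTabCorner hc hfull hss,
    fun h _ hc _ hl => by_contra fun hnb =>
      let ⟨i, j, hcorner, hfull⟩ := T.exists_isTabCorner_of_not_boxedSet hc hl hnb
      h i j hcorner hfull⟩

end SDT

/-- `T` is somewhat special iff all of its corners are empty; in particular,
being somewhat special depends only on the shape of `T`. -/
theorem somewhatSpecial_iff_corners_empty (r n : ℕ) (T : SDT r n) :
    (SomewhatSpecial T ↔ ∀ i j : ℕ, IsTabCorner T i j → (i, j) ∉ T.cells) ∧
    (∀ T' : SDT r n, T'.cells = T.cells →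
      (SomewhatSpecial T' ↔ SomewhatSpecial T)) := by
  refine ⟨T.somewhatSpecial_iff, fun T' hcells => ?_⟩
  rw [T.somewhatSpecial_iff, T'.somewhatSpecial_iff]
  simp only [IsTabCorner, hcells]
end
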